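/- arXiv:2003.13766 — 7 statements merged into one kernel-verified Lean document; each statement's English description precedes it below -/
import Mathlib

section
/- Assume the mixGK setup. Then for every y ∈ ℝᵏ, ‖D_k(γ) y − c‖₂ = ‖L_R A Q V_k y − L_R b‖₂, where Q = γQ₁ + (1−γ)Q₂ and c = (β₁e₁; 0) ∈ ℝ^{2k+1}. -/
open Matrix

/-- The Euclidean (ℓ₂) norm of a vector. -/
noncomputable def l2norm {ι : Type*} [Fintype ι] (v : ι → ℝ) : ℝ :=
  Real.sqrt (v ⬝ᵥ v)

/-!
Write `P = L_R U_{k+1}`. The genGK relations make the columns of `P` orthonormal, the QR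
factorisation makes the columns of `Y_k` orthonormal and orthogonal to those of `P`, and together
they give `L_R A Q V_k = [P Y_k] D_k(γ)` and `L_R b = [P Y_k] c`. Hence
`L_R A Q V_k y - L_R b = [P Y_k] (D_k(γ) y - c)`, and `[P Y_k]` has orthonormal columns, so it
preserves the Euclidean norm.
-/

section Orthonormal

variable {𝕜 ι κ κ' : Type*} [CommSemiring 𝕜] [Fintype ι] [DecidableEq κ]

lemma dotProduct_self_mulVec_of_transpose_mul_self [Fintype κ] {W : Matrix ι κ 𝕜}
    (hW : Wᵀ * W = 1) (v : κ → 𝕜) : (W *ᵥ v) ⬝ᵥ (W *ᵥ v) = v ⬝ᵥ v := by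
  rw [dotProduct_mulVec, ← vecMul_transpose, vecMul_vecMul, hW, vecMul_one]

lemma l2norm_mulVec_of_transpose_mul_self [Fintype κ] {W : Matrix ι κ ℝ} (hW : Wᵀ * W = 1)
    (v : κ → ℝ) : l2norm (W *ᵥ v) = l2norm v := by
  rw [l2norm, l2norm, dotProduct_self_mulVec_of_transpose_mul_self hW]

lemma transpose_fromCols_mul_fromCols_eq_one [DecidableEq κ'] {M : Matrix ι κ 𝕜}
    {N : Matrix ι κ' 𝕜} (hM : Mᵀ * M = 1) (hN : Nᵀ * N = 1) (hMN : Mᵀ * N = 0) :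
    (fromCols M N)ᵀ * fromCols M N = 1 := by
  have hNM : Nᵀ * M = 0 := by
    rw [← transpose_transpose M, ← transpose_mul, hMN, transpose_zero]
  rw [transpose_fromCols, fromRows_mul_fromCols, hM, hN, hMN, hNM, fromBlocks_one]

end Orthonormal

theorem stmt_8_general {m n k : ℕ}
    (A : Matrix (Fin m) (Fin n) ℝ) (R LR : Matrix (Fin m) (Fin m) ℝ)
    (Q₁ Q₂ : Matrix (Fin n) (Fin n) ℝ) (b : Fin m → ℝ) (β₁ γ : ℝ)
    (U : Matrix (Fin m) (Fin (k + 1)) ℝ) (V : Matrix (Fin n) (Fin k) ℝ)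
    (B : Matrix (Fin (k + 1)) (Fin k) ℝ)
    (Y : Matrix (Fin m) (Fin k) ℝ) (Rk : Matrix (Fin k) (Fin k) ℝ)
    (hLR : R⁻¹ = LRᵀ * LR)
    (hb : U *ᵥ (β₁ • (Pi.single 0 1 : Fin (k + 1) → ℝ)) = b)
    (hAQV : A * Q₁ * V = U * B)
    (hU : Uᵀ * R⁻¹ * U = 1)
    (hY : Yᵀ * Y = 1) (hUY : (LR * U)ᵀ * Y = 0)
    (hQR : ((1 : Matrix (Fin m) (Fin m) ℝ) - (LR * U) * (LR * U)ᵀ) * (LR * A * Q₂ * V) = Y * Rk)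
    (Q : Matrix (Fin n) (Fin n) ℝ) (hQ : Q = γ • Q₁ + (1 - γ) • Q₂)
    (D : Matrix (Fin (k + 1) ⊕ Fin k) (Fin k) ℝ)
    (hD : D = fromRows (γ • B + (1 - γ) • ((LR * U)ᵀ * (LR * A * Q₂ * V))) ((1 - γ) • Rk))
    (c : Fin (k + 1) ⊕ Fin k → ℝ) (hc : c = Sum.elim (β₁ • (Pi.single 0 1 : Fin (k + 1) → ℝ)) (0 : Fin k → ℝ)) :
    ∀ y : Fin k → ℝ,
      l2norm (D *ᵥ y - c) = l2norm ((LR * A * Q * V) *ᵥ y - LR *ᵥ b) := by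
  intro y
  set P := LR * U with hP_def
  have hP : Pᵀ * P = 1 := by
    rwa [hP_def, transpose_mul, Matrix.mul_assoc, ← Matrix.mul_assoc LRᵀ, ← hLR,
      ← Matrix.mul_assoc]
  have hQ₁ : LR * A * Q₁ * V = P * B := by
    rw [hP_def, Matrix.mul_assoc, Matrix.mul_assoc, ← Matrix.mul_assoc A, hAQV, Matrix.mul_assoc]
  have hQ₂ : LR * A * Q₂ * V = P * (Pᵀ * (LR * A * Q₂ * V)) + Y * Rk := by
    rw [← hQR, Matrix.sub_mul, Matrix.one_mul, Matrix.mul_assoc P]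
    abel
  have hfactor : LR * A * Q * V = fromCols P Y * D := by
    rw [hD, fromCols_mul_fromRows, hQ, Matrix.mul_add, Matrix.add_mul, Matrix.mul_smul,
      Matrix.mul_smul, Matrix.smul_mul, Matrix.smul_mul, hQ₁]
    nth_rw 1 [hQ₂]
    simp only [Matrix.mul_add, Matrix.mul_smul, smul_add]
    abel
  have hLRb : LR *ᵥ b = fromCols P Y *ᵥ c := by
    rw [hc, fromCols_mulVec_sumElim, mulVec_zero, add_zero, ← hb, mulVec_mulVec]
  rw [hfactor, hLRb, ← mulVec_mulVec, ← mulVec_sub,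
    l2norm_mulVec_of_transpose_mul_self (transpose_fromCols_mul_fromCols_eq_one hP hY hUY)]

theorem stmt_8 {m n k : ℕ}
    (A : Matrix (Fin m) (Fin n) ℝ) (R LR : Matrix (Fin m) (Fin m) ℝ)
    (Q₁ Q₂ : Matrix (Fin n) (Fin n) ℝ) (b : Fin m → ℝ) (β₁ γ : ℝ)
    (U : Matrix (Fin m) (Fin (k + 1)) ℝ) (V : Matrix (Fin n) (Fin k) ℝ)
    (B : Matrix (Fin (k + 1)) (Fin k) ℝ)
    (Y : Matrix (Fin m) (Fin k) ℝ) (Rk : Matrix (Fin k) (Fin k) ℝ)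
    (hR : R.PosDef) (hLR : R⁻¹ = LRᵀ * LR)
    (hQ1 : Q₁.PosDef) (hQ2 : Q₂.PosSemidef)
    (hγ0 : 0 < γ) (hγ1 : γ ≤ 1) (hβ : 0 < β₁)
    (hb : U *ᵥ (β₁ • (Pi.single 0 1 : Fin (k + 1) → ℝ)) = b)
    (hAQV : A * Q₁ * V = U * B)
    (hU : Uᵀ * R⁻¹ * U = 1) (hV : Vᵀ * Q₁ * V = 1)
    (hY : Yᵀ * Y = 1) (hUY : (LR * U)ᵀ * Y = 0)
    (hRtri : Rk.BlockTriangular id)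
    (hQR : ((1 : Matrix (Fin m) (Fin m) ℝ) - (LR * U) * (LR * U)ᵀ) * (LR * A * Q₂ * V) = Y * Rk)
    (Q : Matrix (Fin n) (Fin n) ℝ) (hQ : Q = γ • Q₁ + (1 - γ) • Q₂)
    (D : Matrix (Fin (k + 1) ⊕ Fin k) (Fin k) ℝ)
    (hD : D = fromRows (γ • B + (1 - γ) • ((LR * U)ᵀ * (LR * A * Q₂ * V))) ((1 - γ) • Rk))
    (c : Fin (k + 1) ⊕ Fin k → ℝ) (hc : c = Sum.elim (β₁ • (Pi.single 0 1 : Fin (k + 1) → ℝ)) (0 : Fin k → ℝ)) :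
    ∀ y : Fin k → ℝ,
      l2norm (D *ᵥ y - c) = l2norm ((LR * A * Q * V) *ᵥ y - LR *ᵥ b) :=
  stmt_8_general A R LR Q₁ Q₂ b β₁ γ U V B Y Rk hLR hb hAQV hU hY hUY hQR Q hQ D hD c hc
end

section
/- Assume the mixGK setup. Then D_k(γ)ᵀD_k(γ) = (L_R A Q V_k)ᵀ(L_R A Q V_k) and D_k(γ)ᵀ c = (L_R A Q V_k)ᵀ L_R b, where Q = γQ₁ + (1−γ)Q₂ and c = (β₁e₁; 0) ∈ ℝ^{2k+1}. -/
/-!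
Stack the orthonormal bases `L_R U_{k+1}` and `Y_k` into one matrix `W` with orthonormal
columns. The thin QR relation splits `L_R A Q₂ V_k` into its component in the range of
`L_R U_{k+1}` and the remainder `Y_k R_k`, and together with `A Q₁ V_k = U_{k+1} B_k` this shows
`L_R A Q V_k = W D_k(γ)`, while `L_R b = W c`. Since `Wᵀ W = I`, both normal-equation identities
follow.
-/

open Matrix

namespace Matrix

variable {R l m n p q : Type*} [Fintype m]

section CommSemiring

variable [CommSemiring R]

lemma transpose_mul_mul_self_eq_one_of_eq_transpose_mul_self [DecidableEq n]
    {S L : Matrix m m R} {U : Matrix m n R} (hS : S = Lᵀ * L) (hU : Uᵀ * S * U = 1) :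
    (L * U)ᵀ * (L * U) = 1 := by
  rw [← hU, hS, transpose_mul]
  simp only [Matrix.mul_assoc]

lemma fromCols_transpose_mul_self_eq_one [DecidableEq n] [DecidableEq p]
    {P : Matrix m n R} {Y : Matrix m p R}
    (hP : Pᵀ * P = 1) (hY : Yᵀ * Y = 1) (hPY : Pᵀ * Y = 0) :
    (fromCols P Y)ᵀ * fromCols P Y = 1 := by
  have hYP : Yᵀ * P = 0 := by simpa using congrArg transpose hPY
  rw [transpose_fromCols, fromRows_mul_fromCols, hP, hY, hPY, hYP, fromBlocks_one]

variable [Fintype l] [DecidableEq l] {W : Matrix m l R}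

lemma transpose_mul_self_of_transpose_mul_self_eq_one (hW : Wᵀ * W = 1) (D : Matrix l q R) :
    (W * D)ᵀ * (W * D) = Dᵀ * D := by
  rw [transpose_mul, Matrix.mul_assoc, ← Matrix.mul_assoc Wᵀ, hW, Matrix.one_mul]

lemma transpose_mulVec_mulVec_of_transpose_mul_self_eq_one [Fintype q] (hW : Wᵀ * W = 1)
    (D : Matrix l q R) (c : l → R) : (W * D)ᵀ *ᵥ (W *ᵥ c) = Dᵀ *ᵥ c := by
  rw [transpose_mul, mulVec_mulVec, Matrix.mul_assoc, hW, Matrix.mul_one]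

end CommSemiring

lemma smul_add_smul_eq_fromCols_mul_fromRows [CommRing R] [Fintype n] [Fintype p] [DecidableEq m]
    {P : Matrix m n R} {Y : Matrix m p R} {M₁ M₂ : Matrix m q R} {B : Matrix n q R}
    {T : Matrix p q R} (hM₁ : M₁ = P * B) (hM₂ : (1 - P * Pᵀ) * M₂ = Y * T) (γ : R) :
    γ • M₁ + (1 - γ) • M₂ =
      fromCols P Y * fromRows (γ • B + (1 - γ) • (Pᵀ * M₂)) ((1 - γ) • T) := by
  have hsplit : M₂ = P * (Pᵀ * M₂) + Y * T := by
    rw [← hM₂, Matrix.sub_mul, Matrix.one_mul, Matrix.mul_assoc]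
    abel
  rw [fromCols_mul_fromRows, Matrix.mul_add, Matrix.mul_smul, Matrix.mul_smul, Matrix.mul_smul,
    hM₁]
  conv_lhs => rw [hsplit]
  rw [smul_add]
  abel

end Matrix

theorem stmt_9_general {m n k : ℕ}
    (A : Matrix (Fin m) (Fin n) ℝ) (R LR : Matrix (Fin m) (Fin m) ℝ)
    (Q₁ Q₂ : Matrix (Fin n) (Fin n) ℝ) (b : Fin m → ℝ) (β₁ γ : ℝ)
    (U : Matrix (Fin m) (Fin (k + 1)) ℝ) (V : Matrix (Fin n) (Fin k) ℝ)
    (B : Matrix (Fin (k + 1)) (Fin k) ℝ)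
    (Y : Matrix (Fin m) (Fin k) ℝ) (Rk : Matrix (Fin k) (Fin k) ℝ)
    (hLR : R⁻¹ = LRᵀ * LR)
    (hb : U *ᵥ (β₁ • (Pi.single 0 1 : Fin (k + 1) → ℝ)) = b)
    (hAQV : A * Q₁ * V = U * B)
    (hU : Uᵀ * R⁻¹ * U = 1)
    (hY : Yᵀ * Y = 1) (hUY : (LR * U)ᵀ * Y = 0)
    (hQR : ((1 : Matrix (Fin m) (Fin m) ℝ) - (LR * U) * (LR * U)ᵀ) * (LR * A * Q₂ * V) = Y * Rk)
    (Q : Matrix (Fin n) (Fin n) ℝ) (hQ : Q = γ • Q₁ + (1 - γ) • Q₂)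
    (D : Matrix (Fin (k + 1) ⊕ Fin k) (Fin k) ℝ)
    (hD : D = fromRows (γ • B + (1 - γ) • ((LR * U)ᵀ * (LR * A * Q₂ * V))) ((1 - γ) • Rk))
    (c : Fin (k + 1) ⊕ Fin k → ℝ) (hc : c = Sum.elim (β₁ • (Pi.single 0 1 : Fin (k + 1) → ℝ)) (0 : Fin k → ℝ)) :
    Dᵀ * D = (LR * A * Q * V)ᵀ * (LR * A * Q * V) ∧
    Dᵀ *ᵥ c = (LR * A * Q * V)ᵀ *ᵥ (LR *ᵥ b) := by
  have hLRU : (LR * U)ᵀ * (LR * U) = 1 :=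
    transpose_mul_mul_self_eq_one_of_eq_transpose_mul_self hLR hU
  have hW : (fromCols (LR * U) Y)ᵀ * fromCols (LR * U) Y = 1 :=
    fromCols_transpose_mul_self_eq_one hLRU hY hUY
  have hLRAQ₁V : LR * A * Q₁ * V = LR * U * B := by
    simp only [Matrix.mul_assoc, ← hAQV]
  have hLRAQV : LR * A * Q * V = fromCols (LR * U) Y * D := by
    rw [hD, ← smul_add_smul_eq_fromCols_mul_fromRows hLRAQ₁V hQR, hQ]
    simp only [Matrix.mul_add, Matrix.add_mul, Matrix.mul_smul, Matrix.smul_mul]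
  have hLRb : LR *ᵥ b = fromCols (LR * U) Y *ᵥ c := by
    rw [hc, fromCols_mulVec_sumElim, mulVec_zero, add_zero, ← hb, mulVec_mulVec]
  rw [hLRAQV, hLRb, transpose_mul_self_of_transpose_mul_self_eq_one hW,
    transpose_mulVec_mulVec_of_transpose_mul_self_eq_one hW]
  exact ⟨rfl, rfl⟩

theorem stmt_9 {m n k : ℕ}
    (A : Matrix (Fin m) (Fin n) ℝ) (R LR : Matrix (Fin m) (Fin m) ℝ)
    (Q₁ Q₂ : Matrix (Fin n) (Fin n) ℝ) (b : Fin m → ℝ) (β₁ γ : ℝ)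
    (U : Matrix (Fin m) (Fin (k + 1)) ℝ) (V : Matrix (Fin n) (Fin k) ℝ)
    (B : Matrix (Fin (k + 1)) (Fin k) ℝ)
    (Y : Matrix (Fin m) (Fin k) ℝ) (Rk : Matrix (Fin k) (Fin k) ℝ)
    (hR : R.PosDef) (hLR : R⁻¹ = LRᵀ * LR)
    (hQ1 : Q₁.PosDef) (hQ2 : Q₂.PosSemidef)
    (hγ0 : 0 < γ) (hγ1 : γ ≤ 1) (hβ : 0 < β₁)
    (hb : U *ᵥ (β₁ • (Pi.single 0 1 : Fin (k + 1) → ℝ)) = b)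
    (hAQV : A * Q₁ * V = U * B)
    (hU : Uᵀ * R⁻¹ * U = 1) (hV : Vᵀ * Q₁ * V = 1)
    (hY : Yᵀ * Y = 1) (hUY : (LR * U)ᵀ * Y = 0)
    (hRtri : Rk.BlockTriangular id)
    (hQR : ((1 : Matrix (Fin m) (Fin m) ℝ) - (LR * U) * (LR * U)ᵀ) * (LR * A * Q₂ * V) = Y * Rk)
    (Q : Matrix (Fin n) (Fin n) ℝ) (hQ : Q = γ • Q₁ + (1 - γ) • Q₂)
    (D : Matrix (Fin (k + 1) ⊕ Fin k) (Fin k) ℝ)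
    (hD : D = fromRows (γ • B + (1 - γ) • ((LR * U)ᵀ * (LR * A * Q₂ * V))) ((1 - γ) • Rk))
    (c : Fin (k + 1) ⊕ Fin k → ℝ) (hc : c = Sum.elim (β₁ • (Pi.single 0 1 : Fin (k + 1) → ℝ)) (0 : Fin k → ℝ)) :
    Dᵀ * D = (LR * A * Q * V)ᵀ * (LR * A * Q * V) ∧
    Dᵀ *ᵥ c = (LR * A * Q * V)ᵀ *ᵥ (LR *ᵥ b) :=
  stmt_9_general A R LR Q₁ Q₂ b β₁ γ U V B Y Rk hLR hb hAQV hU hY hUY hQR Q hQ D hD c hc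
end

section
/- (Theorem 3.1) Assume the mixGK setup with k = n, so that V_n ∈ ℝ^{n×n} (hence, since V_nᵀQ₁V_n = I_n, the matrix V_n is invertible). Let λ > 0 and μ ∈ ℝⁿ, and let y_n(λ,γ) = (D_n(γ)ᵀD_n(γ) + λ²γI_n + λ²(1−γ)V_nᵀQ₂V_n)⁻¹ D_n(γ)ᵀ c be the exact solution of the projected problem. Then the matrices D_n(γ)ᵀD_n(γ) + λ²γI_n + λ²(1−γ)V_nᵀQ₂V_n and AᵀR⁻¹AQ + λ²I_n are invertible, and the n-th mixGK iterate s_n = μ + Q V_n y_n(λ,γ) equals the MAP estimate s_MAP = μ + Q(AᵀR⁻¹AQ + λ²I_n)⁻¹AᵀR⁻¹b. -/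
/-!
Write `Ũ = L_R U`. Since `Ũ` and `Y` have orthonormal, mutually orthogonal columns, `W = [Ũ Y]`
satisfies `WᵀW = I`, and the genGK/QR relations say exactly `W D = L_R A Q V` and
`W c = L_R b`. Hence `DᵀD = VᵀQ AᵀR⁻¹A Q V` and `Dᵀc = VᵀQ AᵀR⁻¹ b`, while `VᵀQ₁V = I` gives
`VᵀQV = γI + (1-γ)VᵀQ₂V`, so the projected matrix factors as `VᵀQ (AᵀR⁻¹AQ + λ²I) V`.
With `k = n` the factors `Vᵀ`, `Q` and `V` are invertible and cancel in `V y`.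
-/

open Matrix

namespace Matrix

variable {R : Type*} [CommRing R] {l m n p q : Type*}

theorem transpose_fromCols_mul_fromCols_eq_one [Fintype m] [DecidableEq p] [DecidableEq q]
    {U₁ : Matrix m p R} {U₂ : Matrix m q R}
    (h₁ : U₁ᵀ * U₁ = 1) (h₁₂ : U₁ᵀ * U₂ = 0) (h₂ : U₂ᵀ * U₂ = 1) :
    (fromCols U₁ U₂)ᵀ * fromCols U₁ U₂ = 1 := by
  have h₂₁ : U₂ᵀ * U₁ = 0 := by simpa [transpose_mul] using congrArg transpose h₁₂
  rw [transpose_fromCols, fromRows_mul_fromCols, h₁, h₁₂, h₂₁, h₂, fromBlocks_one]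

variable [Fintype m] [Fintype n] [DecidableEq n] {W : Matrix m n R}

theorem transpose_mul_mul_mul_of_transpose_mul_self_eq_one
    (hW : Wᵀ * W = 1) (X : Matrix n l R) (Z : Matrix n p R) :
    (W * X)ᵀ * (W * Z) = Xᵀ * Z := by
  rw [transpose_mul, Matrix.mul_assoc, ← Matrix.mul_assoc Wᵀ, hW, Matrix.one_mul]

theorem transpose_mul_mulVec_mulVec_of_transpose_mul_self_eq_one [Fintype l]
    (hW : Wᵀ * W = 1) (X : Matrix n l R) (v : n → R) :
    (W * X)ᵀ *ᵥ (W *ᵥ v) = Xᵀ *ᵥ v := by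
  rw [mulVec_mulVec, transpose_mul, Matrix.mul_assoc, hW, Matrix.mul_one]

theorem mulVec_inv_mul_mul_mulVec {K V : Matrix n n R} (hK : IsUnit K)
    (hV : IsUnit V) (N : Matrix n n R) (z : n → R) :
    V *ᵥ ((K * N * V)⁻¹ *ᵥ (K *ᵥ z)) = N⁻¹ *ᵥ z := by
  rw [mulVec_mulVec, mulVec_mulVec, mul_inv_rev, mul_inv_rev, ← Matrix.mul_assoc,
    mul_nonsing_inv _ ((isUnit_iff_isUnit_det V).1 hV), Matrix.one_mul, Matrix.mul_assoc,
    nonsing_inv_mul _ ((isUnit_iff_isUnit_det K).1 hK), Matrix.mul_one]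

omit [Fintype m] in
theorem isUnit_mul_add_smul_one {S Q : Matrix n n ℝ} (hS : S.PosSemidef) (hQ : Q.PosDef)
    {c : ℝ} (hc : 0 < c) :
    IsUnit (S * Q + c • 1) := by
  have hQSQ : (Q * S * Q).PosSemidef := by
    have h := hS.conjTranspose_mul_mul_same Q
    rwa [hQ.isHermitian.eq] at h
  have hQN : (Q * (S * Q + c • 1)).PosDef := by
    rw [Matrix.mul_add, Matrix.mul_smul, Matrix.mul_one, ← Matrix.mul_assoc]
    exact PosDef.posSemidef_add hQSQ (hQ.smul hc)
  rw [isUnit_iff_isUnit_det]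
  exact (IsUnit.mul_iff.1 (det_mul Q _ ▸ (isUnit_iff_isUnit_det _).1 hQN.isUnit)).2

end Matrix

theorem fromCols_mul_fromRows_eq_of_mixGK {R : Type*} [CommRing R] {m n p q : Type*}
    [Fintype m] [Fintype n] [Fintype p] [Fintype q] [DecidableEq m]
    {A : Matrix m n R} {LR : Matrix m m R} {Q₁ Q₂ V : Matrix n n R} {U : Matrix m p R}
    {B : Matrix p n R} {Y : Matrix m q R} {Rk : Matrix q n R} (γ : R)
    (hAQV : A * Q₁ * V = U * B)
    (hQR : (1 - (LR * U) * (LR * U)ᵀ) * (LR * A * Q₂ * V) = Y * Rk) :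
    fromCols (LR * U) Y *
        fromRows (γ • B + (1 - γ) • ((LR * U)ᵀ * (LR * A * Q₂ * V))) ((1 - γ) • Rk) =
      LR * A * (γ • Q₁ + (1 - γ) • Q₂) * V := by
  have hQ₁ : LR * A * Q₁ * V = LR * U * B := by
    rw [Matrix.mul_assoc LR, Matrix.mul_assoc, hAQV, ← Matrix.mul_assoc]
  have hQ₂ : LR * U * ((LR * U)ᵀ * (LR * A * Q₂ * V)) + Y * Rk = LR * A * Q₂ * V := by
    rw [← hQR, Matrix.sub_mul, Matrix.one_mul, Matrix.mul_assoc (LR * U), add_sub_cancel]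
  calc _ = γ • (LR * U * B)
          + (1 - γ) • (LR * U * ((LR * U)ᵀ * (LR * A * Q₂ * V)) + Y * Rk) := by
        simp only [fromCols_mul_fromRows, Matrix.mul_add, Matrix.mul_smul, smul_add]
        abel
    _ = _ := by
        rw [hQ₂, ← hQ₁]
        simp only [Matrix.mul_add, Matrix.add_mul, Matrix.mul_smul, Matrix.smul_mul]

theorem stmt_10_general {m n : ℕ}
    (A : Matrix (Fin m) (Fin n) ℝ) (R LR : Matrix (Fin m) (Fin m) ℝ)
    (Q₁ Q₂ : Matrix (Fin n) (Fin n) ℝ) (b : Fin m → ℝ) (β₁ γ : ℝ)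
    (U : Matrix (Fin m) (Fin (n + 1)) ℝ) (V : Matrix (Fin n) (Fin n) ℝ)
    (B : Matrix (Fin (n + 1)) (Fin n) ℝ)
    (Y : Matrix (Fin m) (Fin n) ℝ) (Rk : Matrix (Fin n) (Fin n) ℝ)
    (hLR : R⁻¹ = LRᵀ * LR)
    (hQ1 : Q₁.PosDef) (hQ2 : Q₂.PosSemidef)
    (hγ0 : 0 < γ) (hγ1 : γ ≤ 1)
    (hb : U *ᵥ (β₁ • (Pi.single 0 1 : Fin (n + 1) → ℝ)) = b)
    (hAQV : A * Q₁ * V = U * B)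
    (hU : Uᵀ * R⁻¹ * U = 1) (hV : Vᵀ * Q₁ * V = 1)
    (hY : Yᵀ * Y = 1) (hUY : (LR * U)ᵀ * Y = 0)
    (hQR : ((1 : Matrix (Fin m) (Fin m) ℝ) - (LR * U) * (LR * U)ᵀ) * (LR * A * Q₂ * V) = Y * Rk)
    (Q : Matrix (Fin n) (Fin n) ℝ) (hQ : Q = γ • Q₁ + (1 - γ) • Q₂)
    (D : Matrix (Fin (n + 1) ⊕ Fin n) (Fin n) ℝ)
    (hD : D = fromRows (γ • B + (1 - γ) • ((LR * U)ᵀ * (LR * A * Q₂ * V))) ((1 - γ) • Rk))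
    (c : Fin (n + 1) ⊕ Fin n → ℝ) (hc : c = Sum.elim (β₁ • (Pi.single 0 1 : Fin (n + 1) → ℝ)) (0 : Fin n → ℝ))
    (lam : ℝ) (hlam : 0 < lam) (μ : Fin n → ℝ)
    (M : Matrix (Fin n) (Fin n) ℝ)
    (hM : M = Dᵀ * D + (lam ^ 2 * γ) • (1 : Matrix (Fin n) (Fin n) ℝ)
        + (lam ^ 2 * (1 - γ)) • (Vᵀ * Q₂ * V))
    (y : Fin n → ℝ) (hy : y = M⁻¹ *ᵥ (Dᵀ *ᵥ c)) :
    IsUnit M ∧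
    IsUnit (Aᵀ * R⁻¹ * A * Q + (lam ^ 2) • (1 : Matrix (Fin n) (Fin n) ℝ)) ∧
    μ + Q *ᵥ (V *ᵥ y) =
      μ + Q *ᵥ ((Aᵀ * R⁻¹ * A * Q + (lam ^ 2) • (1 : Matrix (Fin n) (Fin n) ℝ))⁻¹ *ᵥ
        (Aᵀ *ᵥ (R⁻¹ *ᵥ b))) := by
  set N := Aᵀ * R⁻¹ * A * Q + (lam ^ 2) • (1 : Matrix (Fin n) (Fin n) ℝ)
  have hQpos : Q.PosDef := hQ ▸ (hQ1.smul hγ0).add_posSemidef (hQ2.smul (sub_nonneg.2 hγ1))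
  have hQt : Qᵀ = Q := hQpos.isHermitian.eq
  have hN : IsUnit N := by
    refine isUnit_mul_add_smul_one ?_ hQpos (by positivity)
    simpa [hLR, Matrix.mul_assoc] using posSemidef_conjTranspose_mul_self (LR * A)
  have hVunit : IsUnit V := (isUnit_iff_isUnit_det V).2 (isUnit_det_of_left_inverse hV)
  have hK : IsUnit (Vᵀ * Q) := ((isUnit_transpose V).2 hVunit).mul hQpos.isUnit
  have hW : (fromCols (LR * U) Y)ᵀ * fromCols (LR * U) Y = 1 := by
    refine transpose_fromCols_mul_fromCols_eq_one ?_ hUY hY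
    rw [transpose_mul, Matrix.mul_assoc, ← Matrix.mul_assoc LRᵀ, ← hLR, ← Matrix.mul_assoc, hU]
  have hWD : fromCols (LR * U) Y * D = LR * A * Q * V :=
    hD ▸ hQ ▸ fromCols_mul_fromRows_eq_of_mixGK γ hAQV hQR
  have hWc : fromCols (LR * U) Y *ᵥ c = LR *ᵥ b := by
    rw [hc, fromCols_mulVec_sumElim, mulVec_zero, add_zero, ← mulVec_mulVec, hb]
  have hMeq : M = Vᵀ * Q * N * V := by
    have hVQV : Vᵀ * Q * V = γ • 1 + (1 - γ) • (Vᵀ * Q₂ * V) := by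
      simp only [hQ, Matrix.mul_add, Matrix.add_mul, Matrix.mul_smul, Matrix.smul_mul, hV]
    rw [hM, ← transpose_mul_mul_mul_of_transpose_mul_self_eq_one hW, hWD, add_assoc, mul_smul,
      mul_smul, ← smul_add, ← hVQV]
    simp only [N, hLR, transpose_mul, hQt, Matrix.mul_add, Matrix.add_mul, Matrix.mul_smul,
      Matrix.smul_mul, Matrix.mul_one, Matrix.mul_assoc]
  have hDc : Dᵀ *ᵥ c = (Vᵀ * Q) *ᵥ (Aᵀ *ᵥ (R⁻¹ *ᵥ b)) := by
    rw [← transpose_mul_mulVec_mulVec_of_transpose_mul_self_eq_one hW, hWD, hWc, hLR]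
    simp only [transpose_mul, hQt, mulVec_mulVec, Matrix.mul_assoc]
  refine ⟨hMeq ▸ (hK.mul hN).mul hVunit, hN, ?_⟩
  rw [hy, hDc, hMeq, mulVec_inv_mul_mul_mulVec hK hVunit]

theorem stmt_10 {m n : ℕ}
    (A : Matrix (Fin m) (Fin n) ℝ) (R LR : Matrix (Fin m) (Fin m) ℝ)
    (Q₁ Q₂ : Matrix (Fin n) (Fin n) ℝ) (b : Fin m → ℝ) (β₁ γ : ℝ)
    (U : Matrix (Fin m) (Fin (n + 1)) ℝ) (V : Matrix (Fin n) (Fin n) ℝ)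
    (B : Matrix (Fin (n + 1)) (Fin n) ℝ)
    (Y : Matrix (Fin m) (Fin n) ℝ) (Rk : Matrix (Fin n) (Fin n) ℝ)
    (hR : R.PosDef) (hLR : R⁻¹ = LRᵀ * LR)
    (hQ1 : Q₁.PosDef) (hQ2 : Q₂.PosSemidef)
    (hγ0 : 0 < γ) (hγ1 : γ ≤ 1) (hβ : 0 < β₁)
    (hb : U *ᵥ (β₁ • (Pi.single 0 1 : Fin (n + 1) → ℝ)) = b)
    (hAQV : A * Q₁ * V = U * B)
    (hU : Uᵀ * R⁻¹ * U = 1) (hV : Vᵀ * Q₁ * V = 1)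
    (hY : Yᵀ * Y = 1) (hUY : (LR * U)ᵀ * Y = 0)
    (hRtri : Rk.BlockTriangular id)
    (hQR : ((1 : Matrix (Fin m) (Fin m) ℝ) - (LR * U) * (LR * U)ᵀ) * (LR * A * Q₂ * V) = Y * Rk)
    (Q : Matrix (Fin n) (Fin n) ℝ) (hQ : Q = γ • Q₁ + (1 - γ) • Q₂)
    (D : Matrix (Fin (n + 1) ⊕ Fin n) (Fin n) ℝ)
    (hD : D = fromRows (γ • B + (1 - γ) • ((LR * U)ᵀ * (LR * A * Q₂ * V))) ((1 - γ) • Rk))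
    (c : Fin (n + 1) ⊕ Fin n → ℝ) (hc : c = Sum.elim (β₁ • (Pi.single 0 1 : Fin (n + 1) → ℝ)) (0 : Fin n → ℝ))
    (lam : ℝ) (hlam : 0 < lam) (μ : Fin n → ℝ)
    (M : Matrix (Fin n) (Fin n) ℝ)
    (hM : M = Dᵀ * D + (lam ^ 2 * γ) • (1 : Matrix (Fin n) (Fin n) ℝ)
        + (lam ^ 2 * (1 - γ)) • (Vᵀ * Q₂ * V))
    (y : Fin n → ℝ) (hy : y = M⁻¹ *ᵥ (Dᵀ *ᵥ c)) :
    IsUnit M ∧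
    IsUnit (Aᵀ * R⁻¹ * A * Q + (lam ^ 2) • (1 : Matrix (Fin n) (Fin n) ℝ)) ∧
    μ + Q *ᵥ (V *ᵥ y) =
      μ + Q *ᵥ ((Aᵀ * R⁻¹ * A * Q + (lam ^ 2) • (1 : Matrix (Fin n) (Fin n) ℝ))⁻¹ *ᵥ
        (Aᵀ *ᵥ (R⁻¹ *ᵥ b))) :=
  stmt_10_general A R LR Q₁ Q₂ b β₁ γ U V B Y Rk hLR hQ1 hQ2 hγ0 hγ1 hb hAQV hU hV hY hUY hQR Q hQ D
    hD c hc lam hlam μ M hM y hy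
end

section
/- Assume the mixGK setup, let λ > 0, and set C_k(γ,λ) = (D_k(γ)ᵀD_k(γ) + λ²γI_k + λ²(1−γ)V_kᵀQ₂V_k)⁻¹ D_k(γ)ᵀ. Then the matrix D_k(γ)ᵀD_k(γ) + λ²γI_k + λ²(1−γ)V_kᵀQ₂V_k is invertible and tr(D_k(γ)C_k(γ,λ)) = tr((L_R A Q V_k)((L_R A Q V_k)ᵀ(L_R A Q V_k) + λ²V_kᵀQV_k)⁻¹(L_R A Q V_k)ᵀ), where Q = γQ₁ + (1−γ)Q₂. -/
/-!
Write `Ũ = L_R U` and `G = L_R A Q V`. The genGK relation gives `L_R A Q₁ V = Ũ B`, and the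
QR relation splits `L_R A Q₂ V = Ũ (Ũᵀ L_R A Q₂ V) + Y R_k`; hence `G = [Ũ Y] D`. Since `[Ũ Y]`
has orthonormal columns, `GᵀG = DᵀD`, and `V_kᵀQ₁V_k = I` turns the regularised matrix `M` into
`GᵀG + λ² VᵀQV`. Cycling the trace, `tr(D M⁻¹ Dᵀ) = tr(M⁻¹ DᵀD)` depends on `D` only through
`DᵀD`, so it equals `tr(G M⁻¹ Gᵀ)`.
-/

open Matrix

section Gram

variable {m n p q R : Type*} [Fintype m] [CommRing R]

theorem Matrix.transpose_mul_self_mul_of_transpose_mul_self_eq_one [Fintype p] [DecidableEq p]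
    {W : Matrix m p R} (hW : Wᵀ * W = 1) (X : Matrix p n R) : (W * X)ᵀ * (W * X) = Xᵀ * X := by
  rw [transpose_mul, Matrix.mul_assoc, ← Matrix.mul_assoc Wᵀ, hW, Matrix.one_mul]

theorem Matrix.transpose_fromCols_mul_fromCols_eq_one_s12 [DecidableEq p] [DecidableEq q]
    {U : Matrix m p R} {Y : Matrix m q R} (hU : Uᵀ * U = 1) (hUY : Uᵀ * Y = 0) (hY : Yᵀ * Y = 1) :
    (fromCols U Y)ᵀ * fromCols U Y = 1 := by
  have hYU : Yᵀ * U = 0 := by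
    rw [← transpose_transpose (Yᵀ * U), transpose_mul, transpose_transpose, hUY, transpose_zero]
  rw [transpose_fromCols, fromRows_mul_fromCols, hU, hUY, hYU, hY, fromBlocks_one]

theorem Matrix.trace_mul_mul_transpose_eq_of_transpose_mul_self_eq [Fintype n] [Fintype p]
    {D : Matrix m n R} {G : Matrix p n R} (h : Dᵀ * D = Gᵀ * G) (N : Matrix n n R) :
    (D * N * Dᵀ).trace = (G * N * Gᵀ).trace := by
  rw [trace_mul_cycle, h, ← trace_mul_cycle]

end Gram

theorem mixGK_factorization {m n k : ℕ}
    {A : Matrix (Fin m) (Fin n) ℝ} {LR : Matrix (Fin m) (Fin m) ℝ}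
    {Q₁ Q₂ : Matrix (Fin n) (Fin n) ℝ} {U : Matrix (Fin m) (Fin (k + 1)) ℝ}
    {V : Matrix (Fin n) (Fin k) ℝ} {B : Matrix (Fin (k + 1)) (Fin k) ℝ}
    {Y : Matrix (Fin m) (Fin k) ℝ} {Rk : Matrix (Fin k) (Fin k) ℝ}
    (hAQV : A * Q₁ * V = U * B)
    (hQR : (1 - (LR * U) * (LR * U)ᵀ) * (LR * A * Q₂ * V) = Y * Rk) (γ : ℝ) :
    LR * A * (γ • Q₁ + (1 - γ) • Q₂) * V =
      fromCols (LR * U) Y *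
        fromRows (γ • B + (1 - γ) • ((LR * U)ᵀ * (LR * A * Q₂ * V))) ((1 - γ) • Rk) := by
  have h₁ : LR * A * Q₁ * V = LR * U * B := by
    simp only [Matrix.mul_assoc] at hAQV ⊢
    rw [hAQV]
  have h₂ : LR * A * Q₂ * V = LR * U * ((LR * U)ᵀ * (LR * A * Q₂ * V)) + Y * Rk := by
    rw [← hQR, Matrix.sub_mul, Matrix.one_mul, Matrix.mul_assoc (LR * U)]
    abel
  rw [fromCols_mul_fromRows, Matrix.mul_add, Matrix.add_mul, Matrix.mul_smul, Matrix.smul_mul,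
    Matrix.mul_smul, Matrix.smul_mul, h₁]
  conv_lhs => rw [h₂]
  simp only [Matrix.mul_add, Matrix.mul_smul]
  module

theorem stmt_12_general {m n k : ℕ}
    (A : Matrix (Fin m) (Fin n) ℝ) (R LR : Matrix (Fin m) (Fin m) ℝ)
    (Q₁ Q₂ : Matrix (Fin n) (Fin n) ℝ) (γ : ℝ)
    (U : Matrix (Fin m) (Fin (k + 1)) ℝ) (V : Matrix (Fin n) (Fin k) ℝ)
    (B : Matrix (Fin (k + 1)) (Fin k) ℝ)
    (Y : Matrix (Fin m) (Fin k) ℝ) (Rk : Matrix (Fin k) (Fin k) ℝ)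
    (hLR : R⁻¹ = LRᵀ * LR)
    (hQ2 : Q₂.PosSemidef)
    (hγ0 : 0 < γ) (hγ1 : γ ≤ 1)
    (hAQV : A * Q₁ * V = U * B)
    (hU : Uᵀ * R⁻¹ * U = 1) (hV : Vᵀ * Q₁ * V = 1)
    (hY : Yᵀ * Y = 1) (hUY : (LR * U)ᵀ * Y = 0)
    (hQR : ((1 : Matrix (Fin m) (Fin m) ℝ) - (LR * U) * (LR * U)ᵀ) * (LR * A * Q₂ * V) = Y * Rk)
    (Q : Matrix (Fin n) (Fin n) ℝ) (hQ : Q = γ • Q₁ + (1 - γ) • Q₂)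
    (D : Matrix (Fin (k + 1) ⊕ Fin k) (Fin k) ℝ)
    (hD : D = fromRows (γ • B + (1 - γ) • ((LR * U)ᵀ * (LR * A * Q₂ * V))) ((1 - γ) • Rk))
    (lam : ℝ) (hlam : 0 < lam)
    (M : Matrix (Fin k) (Fin k) ℝ)
    (hM : M = Dᵀ * D + (lam ^ 2 * γ) • (1 : Matrix (Fin k) (Fin k) ℝ)
        + (lam ^ 2 * (1 - γ)) • (Vᵀ * Q₂ * V))
    (C : Matrix (Fin k) (Fin (k + 1) ⊕ Fin k) ℝ) (hC : C = M⁻¹ * Dᵀ) :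
    IsUnit M ∧
    (D * C).trace =
      ((LR * A * Q * V) *
        (((LR * A * Q * V)ᵀ * (LR * A * Q * V) + (lam ^ 2) • (Vᵀ * Q * V))⁻¹) *
        (LR * A * Q * V)ᵀ).trace := by
  have hŨ : (LR * U)ᵀ * (LR * U) = 1 := by
    rw [← hU, hLR, transpose_mul]
    simp only [Matrix.mul_assoc]
  have hGD : LR * A * Q * V = fromCols (LR * U) Y * D := by
    rw [hQ, hD, mixGK_factorization hAQV hQR]
  have hgram : Dᵀ * D = (LR * A * Q * V)ᵀ * (LR * A * Q * V) := by
    rw [hGD, transpose_mul_self_mul_of_transpose_mul_self_eq_one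
      (transpose_fromCols_mul_fromCols_eq_one_s12 hŨ hUY hY)]
  have hVQV : Vᵀ * Q * V = γ • 1 + (1 - γ) • (Vᵀ * Q₂ * V) := by
    rw [hQ, Matrix.mul_add, Matrix.add_mul, Matrix.mul_smul, Matrix.smul_mul, Matrix.mul_smul,
      Matrix.smul_mul, hV]
  have hMG : M = (LR * A * Q * V)ᵀ * (LR * A * Q * V) + lam ^ 2 • (Vᵀ * Q * V) := by
    rw [hM, hgram, hVQV]
    module
  have hMpd : M.PosDef := by
    rw [hM]
    refine ((PosDef.posSemidef_add (posSemidef_conjTranspose_mul_self D)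
      (PosDef.one.smul ?_)).add_posSemidef ((hQ2.conjTranspose_mul_mul_same V).smul ?_))
    · positivity
    · exact mul_nonneg (sq_nonneg lam) (sub_nonneg.2 hγ1)
  refine ⟨hMpd.isUnit, ?_⟩
  rw [hC, ← hMG, ← Matrix.mul_assoc, trace_mul_mul_transpose_eq_of_transpose_mul_self_eq hgram]

theorem stmt_12 {m n k : ℕ}
    (A : Matrix (Fin m) (Fin n) ℝ) (R LR : Matrix (Fin m) (Fin m) ℝ)
    (Q₁ Q₂ : Matrix (Fin n) (Fin n) ℝ) (b : Fin m → ℝ) (β₁ γ : ℝ)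
    (U : Matrix (Fin m) (Fin (k + 1)) ℝ) (V : Matrix (Fin n) (Fin k) ℝ)
    (B : Matrix (Fin (k + 1)) (Fin k) ℝ)
    (Y : Matrix (Fin m) (Fin k) ℝ) (Rk : Matrix (Fin k) (Fin k) ℝ)
    (hR : R.PosDef) (hLR : R⁻¹ = LRᵀ * LR)
    (hQ1 : Q₁.PosDef) (hQ2 : Q₂.PosSemidef)
    (hγ0 : 0 < γ) (hγ1 : γ ≤ 1) (hβ : 0 < β₁)
    (hb : U *ᵥ (β₁ • (Pi.single 0 1 : Fin (k + 1) → ℝ)) = b)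
    (hAQV : A * Q₁ * V = U * B)
    (hU : Uᵀ * R⁻¹ * U = 1) (hV : Vᵀ * Q₁ * V = 1)
    (hY : Yᵀ * Y = 1) (hUY : (LR * U)ᵀ * Y = 0)
    (hRtri : Rk.BlockTriangular id)
    (hQR : ((1 : Matrix (Fin m) (Fin m) ℝ) - (LR * U) * (LR * U)ᵀ) * (LR * A * Q₂ * V) = Y * Rk)
    (Q : Matrix (Fin n) (Fin n) ℝ) (hQ : Q = γ • Q₁ + (1 - γ) • Q₂)
    (D : Matrix (Fin (k + 1) ⊕ Fin k) (Fin k) ℝ)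
    (hD : D = fromRows (γ • B + (1 - γ) • ((LR * U)ᵀ * (LR * A * Q₂ * V))) ((1 - γ) • Rk))
    (c : Fin (k + 1) ⊕ Fin k → ℝ) (hc : c = Sum.elim (β₁ • (Pi.single 0 1 : Fin (k + 1) → ℝ)) (0 : Fin k → ℝ))
    (lam : ℝ) (hlam : 0 < lam)
    (M : Matrix (Fin k) (Fin k) ℝ)
    (hM : M = Dᵀ * D + (lam ^ 2 * γ) • (1 : Matrix (Fin k) (Fin k) ℝ)
        + (lam ^ 2 * (1 - γ)) • (Vᵀ * Q₂ * V))
    (C : Matrix (Fin k) (Fin (k + 1) ⊕ Fin k) ℝ) (hC : C = M⁻¹ * Dᵀ) :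
    IsUnit M ∧
    (D * C).trace =
      ((LR * A * Q * V) *
        (((LR * A * Q * V)ᵀ * (LR * A * Q * V) + (lam ^ 2) • (Vᵀ * Q * V))⁻¹) *
        (LR * A * Q * V)ᵀ).trace :=
  stmt_12_general A R LR Q₁ Q₂ γ U V B Y Rk hLR hQ2 hγ0 hγ1 hAQV hU hV hY hUY hQR Q hQ D hD lam hlam
    M hM C hC
end

section
/- (Lemma 3.2 at k = n) Assume the mixGK setup with k = n, so that V_n ∈ ℝ^{n×n} is invertible, and let λ > 0. Set C_n(γ,λ) = (D_n(γ)ᵀD_n(γ) + λ²γI_n + λ²(1−γ)V_nᵀQ₂V_n)⁻¹ D_n(γ)ᵀ, y_n(γ,λ) = C_n(γ,λ)c, x(γ,λ) = (AᵀR⁻¹AQ + λ²I_n)⁻¹AᵀR⁻¹b, and define the projected residual r_proj(γ,λ) = D_n(γ)y_n(γ,λ) − c, the full residual r_full(γ,λ) = L_R A Q x(γ,λ) − L_R b, and the full influence matrix A(γ,λ) = L_R A Q (QᵀAᵀR⁻¹AQ + λ²Q)⁻¹ QᵀAᵀL_Rᵀ. Then ‖r_proj(γ,λ)‖₂ = ‖r_full(γ,λ)‖₂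 and tr(D_n(γ)C_n(γ,λ)) = tr(A(γ,λ)). -/
open Matrix

/-!
The columns of `W = [L_R U, Y]` are orthonormal, and the genGK and QR relations say
`W D = K V` and `W c = L_R b` with `K = L_R A Q`. Hence `Dᵀ D = Vᵀ Kᵀ K V`, the projected normal
matrix is `Vᵀ (Kᵀ K + λ² Q) V`, and the projected Tikhonov solution is the full one in the
coordinates `x = V y`. As `W` is an isometry the residual norms agree, and both traces equal
`tr ((Kᵀ K + λ² Q)⁻¹ Kᵀ K)`, the projected one after conjugation by `V`.
-/

namespace Matrix

variable {α : Type*} [CommRing α] {l n p q : Type*}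

theorem transpose_mul_fromCols_eq_one [Fintype l] [DecidableEq p] [DecidableEq q]
    {U : Matrix l p α} {Y : Matrix l q α}
    (hU : Uᵀ * U = 1) (hY : Yᵀ * Y = 1) (hUY : Uᵀ * Y = 0) :
    (fromCols U Y)ᵀ * fromCols U Y = 1 := by
  have hYU : Yᵀ * U = 0 := by simpa using congrArg transpose hUY
  rw [transpose_fromCols, fromRows_mul_fromCols, hU, hY, hUY, hYU, fromBlocks_one]

theorem dotProduct_mulVec_self_of_transpose_mul_self_eq_one [Fintype l] [Fintype p]
    [DecidableEq p] {W : Matrix l p α} (hW : Wᵀ * W = 1) (u : p → α) :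
    (W *ᵥ u) ⬝ᵥ (W *ᵥ u) = u ⬝ᵥ u := by
  rw [dotProduct_mulVec, ← mulVec_transpose, mulVec_mulVec, hW, one_mulVec]

theorem transpose_mul_self_eq_one_of_inv_eq [Fintype l] [DecidableEq l] [DecidableEq p] {R L : Matrix l l α} {U : Matrix l p α}
    (hL : R⁻¹ = Lᵀ * L) (hU : Uᵀ * R⁻¹ * U = 1) :
    (L * U)ᵀ * (L * U) = 1 := by
  rw [transpose_mul, Matrix.mul_assoc, ← Matrix.mul_assoc Lᵀ, ← hL, ← Matrix.mul_assoc, hU]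

theorem transpose_mul_self_eq_of_mul_eq [Fintype l] [Fintype n] [Fintype p] [DecidableEq p]
    {W : Matrix l p α} {D : Matrix p n α} {K : Matrix l n α} {V : Matrix n n α}
    (hW : Wᵀ * W = 1) (hWD : W * D = K * V) :
    Dᵀ * D = Vᵀ * (Kᵀ * K) * V := by
  calc Dᵀ * D = (W * D)ᵀ * (W * D) := by
        rw [transpose_mul, Matrix.mul_assoc, ← Matrix.mul_assoc Wᵀ, hW, Matrix.one_mul]
    _ = Vᵀ * (Kᵀ * K) * V := by
        rw [hWD, transpose_mul]
        simp only [Matrix.mul_assoc]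

theorem transpose_mulVec_eq_of_mul_eq [Fintype l] [Fintype n] [Fintype p] [DecidableEq p]
    {W : Matrix l p α} {D : Matrix p n α} {K : Matrix l n α} {V : Matrix n n α}
    {c : p → α} {d : l → α} (hW : Wᵀ * W = 1) (hWD : W * D = K * V) (hWc : W *ᵥ c = d) :
    Dᵀ *ᵥ c = Vᵀ *ᵥ (Kᵀ *ᵥ d) := by
  rw [mulVec_mulVec, ← transpose_mul, ← hWD, ← hWc, transpose_mul, mulVec_mulVec,
    Matrix.mul_assoc, hW, Matrix.mul_one]

theorem fromCols_mul_fromRows_eq_smul_add_smul [Fintype l] [Fintype p] [Fintype q]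
    {U : Matrix l p α} {Y : Matrix l q α} {B : Matrix p n α} {F P : Matrix l n α}
    {T : Matrix q n α} (γ : α) (hB : U * B = P) (hF : F - U * (Uᵀ * F) = Y * T) :
    fromCols U Y * fromRows (γ • B + (1 - γ) • (Uᵀ * F)) ((1 - γ) • T)
      = γ • P + (1 - γ) • F := by
  rw [fromCols_mul_fromRows, Matrix.mul_add, Matrix.mul_smul, Matrix.mul_smul,
    Matrix.mul_smul, ← hF, hB]
  module

variable [Fintype n] [DecidableEq n]

theorem transpose_mul_smul_add_smul_mul {V Q₁ : Matrix n n α} (hV : Vᵀ * Q₁ * V = 1)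
    (γ : α) (Q₂ : Matrix n n α) :
    Vᵀ * (γ • Q₁ + (1 - γ) • Q₂) * V = γ • 1 + (1 - γ) • (Vᵀ * Q₂ * V) := by
  simp only [Matrix.mul_add, Matrix.add_mul, Matrix.mul_smul, Matrix.smul_mul, hV]

/- `mul_inv_rev` also holds for the junk inverse of a singular matrix, so `G` may be singular
in this lemma and the next. -/
theorem mulVec_inv_transpose_mul_mul_mulVec {V : Matrix n n α} (hV : IsUnit V.det)
    (G : Matrix n n α) (v : n → α) :
    V *ᵥ ((Vᵀ * G * V)⁻¹ *ᵥ (Vᵀ *ᵥ v)) = G⁻¹ *ᵥ v := by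
  rw [mul_inv_rev, mul_inv_rev, mulVec_mulVec, mulVec_mulVec, ← Matrix.mul_assoc,
    Matrix.mul_nonsing_inv _ hV, Matrix.one_mul, Matrix.mul_assoc,
    Matrix.nonsing_inv_mul _ (isUnit_det_transpose V hV), Matrix.mul_one]

theorem trace_mul_inv_transpose_mul_mul_transpose [Fintype l] [Fintype p]
    {V G : Matrix n n α} (hV : IsUnit V.det) {D : Matrix p n α} {K : Matrix l n α}
    (hD : Dᵀ * D = Vᵀ * (Kᵀ * K) * V) :
    (D * ((Vᵀ * G * V)⁻¹ * Dᵀ)).trace = (K * G⁻¹ * Kᵀ).trace := by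
  rw [← Matrix.mul_assoc, trace_mul_comm, ← Matrix.mul_assoc, trace_mul_comm, hD,
    mul_inv_rev, mul_inv_rev]
  calc (V⁻¹ * (G⁻¹ * Vᵀ⁻¹) * (Vᵀ * (Kᵀ * K) * V)).trace
      = (V⁻¹ * (G⁻¹ * (Vᵀ⁻¹ * Vᵀ) * (Kᵀ * K) * V)).trace := by simp only [Matrix.mul_assoc]
    _ = (G⁻¹ * (Kᵀ * K)).trace := by
      rw [Matrix.nonsing_inv_mul _ (isUnit_det_transpose V hV), Matrix.mul_one, trace_mul_comm,
        Matrix.mul_assoc, Matrix.mul_nonsing_inv _ hV, Matrix.mul_one]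
    _ = (K * G⁻¹ * Kᵀ).trace := by
      rw [← Matrix.mul_assoc, trace_mul_comm, Matrix.mul_assoc K]

theorem inv_mul_add_smul_one {Q : Matrix n n α} (hQ : IsUnit Q.det) (N : Matrix n n α) (μ : α) :
    (N * Q + μ • 1)⁻¹ = (Q * N * Q + μ • Q)⁻¹ * Q := by
  rw [show Q * N * Q + μ • Q = Q * (N * Q + μ • 1) by
      rw [Matrix.mul_add, Matrix.mul_smul, Matrix.mul_one, Matrix.mul_assoc],
    mul_inv_rev, Matrix.mul_assoc, Matrix.nonsing_inv_mul _ hQ, Matrix.mul_one]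

end Matrix

theorem stmt_14_general {m n : ℕ}
    (A : Matrix (Fin m) (Fin n) ℝ) (R LR : Matrix (Fin m) (Fin m) ℝ)
    (Q₁ Q₂ : Matrix (Fin n) (Fin n) ℝ) (b : Fin m → ℝ) (β₁ γ : ℝ)
    (U : Matrix (Fin m) (Fin (n + 1)) ℝ) (V : Matrix (Fin n) (Fin n) ℝ)
    (B : Matrix (Fin (n + 1)) (Fin n) ℝ)
    (Y : Matrix (Fin m) (Fin n) ℝ) (Rk : Matrix (Fin n) (Fin n) ℝ)
    (hLR : R⁻¹ = LRᵀ * LR)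
    (hQ1 : Q₁.PosDef) (hQ2 : Q₂.PosSemidef)
    (hγ0 : 0 < γ) (hγ1 : γ ≤ 1)
    (hb : U *ᵥ (β₁ • (Pi.single 0 1 : Fin (n + 1) → ℝ)) = b)
    (hAQV : A * Q₁ * V = U * B)
    (hU : Uᵀ * R⁻¹ * U = 1) (hV : Vᵀ * Q₁ * V = 1)
    (hY : Yᵀ * Y = 1) (hUY : (LR * U)ᵀ * Y = 0)
    (hQR : ((1 : Matrix (Fin m) (Fin m) ℝ) - (LR * U) * (LR * U)ᵀ) * (LR * A * Q₂ * V) = Y * Rk)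
    (Q : Matrix (Fin n) (Fin n) ℝ) (hQ : Q = γ • Q₁ + (1 - γ) • Q₂)
    (D : Matrix (Fin (n + 1) ⊕ Fin n) (Fin n) ℝ)
    (hD : D = fromRows (γ • B + (1 - γ) • ((LR * U)ᵀ * (LR * A * Q₂ * V))) ((1 - γ) • Rk))
    (c : Fin (n + 1) ⊕ Fin n → ℝ) (hc : c = Sum.elim (β₁ • (Pi.single 0 1 : Fin (n + 1) → ℝ)) (0 : Fin n → ℝ))
    (lam : ℝ)
    (M : Matrix (Fin n) (Fin n) ℝ)
    (hM : M = Dᵀ * D + (lam ^ 2 * γ) • (1 : Matrix (Fin n) (Fin n) ℝ)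
        + (lam ^ 2 * (1 - γ)) • (Vᵀ * Q₂ * V))
    (C : Matrix (Fin n) (Fin (n + 1) ⊕ Fin n) ℝ) (hC : C = M⁻¹ * Dᵀ)
    (y : Fin n → ℝ) (hy : y = C *ᵥ c)
    (x : Fin n → ℝ)
    (hx : x = (Aᵀ * R⁻¹ * A * Q + (lam ^ 2) • (1 : Matrix (Fin n) (Fin n) ℝ))⁻¹ *ᵥ
        (Aᵀ *ᵥ (R⁻¹ *ᵥ b)))
    (Afull : Matrix (Fin m) (Fin m) ℝ)
    (hAfull : Afull = LR * A * Q * (Qᵀ * Aᵀ * R⁻¹ * A * Q + (lam ^ 2) • Q)⁻¹ * Qᵀ * Aᵀ * LRᵀ) :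
    l2norm (D *ᵥ y - c) = l2norm ((LR * A * Q) *ᵥ x - LR *ᵥ b) ∧
    (D * C).trace = Afull.trace := by
  have hQpd : Q.PosDef := hQ ▸ (hQ1.smul hγ0).add_posSemidef (hQ2.smul (sub_nonneg.2 hγ1))
  have hQt : Qᵀ = Q := by simpa using hQpd.isHermitian.eq
  have hVdet : IsUnit V.det := isUnit_det_of_left_inverse hV
  set K := LR * A * Q
  set W := fromCols (LR * U) Y
  have hW : Wᵀ * W = 1 :=
    transpose_mul_fromCols_eq_one (transpose_mul_self_eq_one_of_inv_eq hLR hU) hY hUY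
  have hWD : W * D = K * V := by
    rw [hD, fromCols_mul_fromRows_eq_smul_add_smul γ (P := LR * A * Q₁ * V)]
    · simp only [K, hQ, Matrix.mul_add, Matrix.add_mul, Matrix.mul_smul, Matrix.smul_mul]
    · simp only [Matrix.mul_assoc, ← hAQV]
    · rw [← hQR, Matrix.sub_mul, Matrix.one_mul, Matrix.mul_assoc (LR * U)]
  have hWc : W *ᵥ c = LR *ᵥ b := by
    rw [hc, fromCols_mulVec_sumElim, mulVec_zero, add_zero, ← mulVec_mulVec, hb]
  have hDD := transpose_mul_self_eq_of_mul_eq hW hWD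
  have hMG : M = Vᵀ * (Kᵀ * K + lam ^ 2 • Q) * V := by
    rw [hM, hDD, Matrix.mul_add, Matrix.add_mul, Matrix.mul_smul, Matrix.smul_mul, hQ,
      transpose_mul_smul_add_smul_mul hV]
    module
  have hxy : x = V *ᵥ y := by
    rw [hy, hC, ← mulVec_mulVec, transpose_mulVec_eq_of_mul_eq hW hWD hWc, hMG,
      mulVec_inv_transpose_mul_mul_mulVec hVdet, hx,
      inv_mul_add_smul_one hQpd.det_pos.ne'.isUnit, ← mulVec_mulVec]
    simp only [K, transpose_mul, hQt, hLR, mulVec_mulVec, Matrix.mul_assoc]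
  constructor
  · have hres : W *ᵥ (D *ᵥ y - c) = K *ᵥ x - LR *ᵥ b := by
      rw [mulVec_sub, hWc, mulVec_mulVec, hWD, hxy, mulVec_mulVec]
    rw [l2norm, l2norm, ← hres, dotProduct_mulVec_self_of_transpose_mul_self_eq_one hW]
  · rw [hC, hMG, trace_mul_inv_transpose_mul_mul_transpose hVdet hDD, hAfull]
    simp only [K, transpose_mul, hLR, Matrix.mul_assoc]

theorem stmt_14 {m n : ℕ}
    (A : Matrix (Fin m) (Fin n) ℝ) (R LR : Matrix (Fin m) (Fin m) ℝ)
    (Q₁ Q₂ : Matrix (Fin n) (Fin n) ℝ) (b : Fin m → ℝ) (β₁ γ : ℝ)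
    (U : Matrix (Fin m) (Fin (n + 1)) ℝ) (V : Matrix (Fin n) (Fin n) ℝ)
    (B : Matrix (Fin (n + 1)) (Fin n) ℝ)
    (Y : Matrix (Fin m) (Fin n) ℝ) (Rk : Matrix (Fin n) (Fin n) ℝ)
    (hR : R.PosDef) (hLR : R⁻¹ = LRᵀ * LR)
    (hQ1 : Q₁.PosDef) (hQ2 : Q₂.PosSemidef)
    (hγ0 : 0 < γ) (hγ1 : γ ≤ 1) (hβ : 0 < β₁)
    (hb : U *ᵥ (β₁ • (Pi.single 0 1 : Fin (n + 1) → ℝ)) = b)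
    (hAQV : A * Q₁ * V = U * B)
    (hU : Uᵀ * R⁻¹ * U = 1) (hV : Vᵀ * Q₁ * V = 1)
    (hY : Yᵀ * Y = 1) (hUY : (LR * U)ᵀ * Y = 0)
    (hRtri : Rk.BlockTriangular id)
    (hQR : ((1 : Matrix (Fin m) (Fin m) ℝ) - (LR * U) * (LR * U)ᵀ) * (LR * A * Q₂ * V) = Y * Rk)
    (Q : Matrix (Fin n) (Fin n) ℝ) (hQ : Q = γ • Q₁ + (1 - γ) • Q₂)
    (D : Matrix (Fin (n + 1) ⊕ Fin n) (Fin n) ℝ)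
    (hD : D = fromRows (γ • B + (1 - γ) • ((LR * U)ᵀ * (LR * A * Q₂ * V))) ((1 - γ) • Rk))
    (c : Fin (n + 1) ⊕ Fin n → ℝ) (hc : c = Sum.elim (β₁ • (Pi.single 0 1 : Fin (n + 1) → ℝ)) (0 : Fin n → ℝ))
    (lam : ℝ) (hlam : 0 < lam)
    (M : Matrix (Fin n) (Fin n) ℝ)
    (hM : M = Dᵀ * D + (lam ^ 2 * γ) • (1 : Matrix (Fin n) (Fin n) ℝ)
        + (lam ^ 2 * (1 - γ)) • (Vᵀ * Q₂ * V))
    (C : Matrix (Fin n) (Fin (n + 1) ⊕ Fin n) ℝ) (hC : C = M⁻¹ * Dᵀ)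
    (y : Fin n → ℝ) (hy : y = C *ᵥ c)
    (x : Fin n → ℝ)
    (hx : x = (Aᵀ * R⁻¹ * A * Q + (lam ^ 2) • (1 : Matrix (Fin n) (Fin n) ℝ))⁻¹ *ᵥ
        (Aᵀ *ᵥ (R⁻¹ *ᵥ b)))
    (Afull : Matrix (Fin m) (Fin m) ℝ)
    (hAfull : Afull = LR * A * Q * (Qᵀ * Aᵀ * R⁻¹ * A * Q + (lam ^ 2) • Q)⁻¹ * Qᵀ * Aᵀ * LRᵀ) :
    l2norm (D *ᵥ y - c) = l2norm ((LR * A * Q) *ᵥ x - LR *ᵥ b) ∧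
    (D * C).trace = Afull.trace :=
  stmt_14_general A R LR Q₁ Q₂ b β₁ γ U V B Y Rk hLR hQ1 hQ2 hγ0 hγ1 hb hAQV hU hV hY hUY hQR Q hQ D
    hD c hc lam M hM C hC y hy x hx Afull hAfull
end

section
/- (Theorem 3.3 at k = n) Assume the mixGK setup with k = n, and let σ² ≥ 0. For 0 < γ ≤ 1 and λ > 0 define C_n(γ,λ) = (D_n(γ)ᵀD_n(γ) + λ²γI_n + λ²(1−γ)V_nᵀQ₂V_n)⁻¹ D_n(γ)ᵀ, the projected UPRE function U_proj(γ,λ) = (1/(2n+1))‖D_n(γ)C_n(γ,λ)c − c‖₂² + (2σ²/(2n+1)) tr(D_n(γ)C_n(γ,λ)) − σ², and, with x(γ,λ) = (AᵀR⁻¹AQ + λ²I_n)⁻¹AᵀR⁻¹b and A(γ,λ) = L_R A Q (QᵀAᵀR⁻¹AQ + λ²Q)⁻¹ QᵀAᵀL_Rᵀ, the full UPRE function U_full(γ,λ) = (1/m)‖L_R A Q x(γ,λ) − L_R b‖₂² + (2σ²/m) tr(A(γ,λ)) − σ². Then a pair (γ*,λ*) with 0 < γ* ≤ 1, λ* > 0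 satisfies U_proj(γ*,λ*) ≤ U_proj(γ,λ) for all 0 < γ ≤ 1, λ > 0 if and only if it satisfies U_full(γ*,λ*) ≤ U_full(γ,λ) for all 0 < γ ≤ 1, λ > 0; i.e., the minimizers of the projected and full UPRE functions coincide at k = n. -/
/-!
Put `W = [L_R U, Y]`: its columns are orthonormal, and the mixGK relations say
`L_R A Q_γ V = W D(γ)` and `L_R b = W c`. With `G = L_R A Q_γ` the full solution is
`x = (GᵀG + λ² Q_γ)⁻¹ Gᵀ L_R b`, and since `V` is invertible the influence matrix
`G (GᵀG + λ² Q_γ)⁻¹ Gᵀ` equals `W (D(γ) C(γ,λ)) Wᵀ`. So residual norms and traces of the two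
problems agree, `m (U_full + σ²) = (2n+1) (U_proj + σ²)` at every admissible `(γ, λ)`, and the two
functions have the same minimizers.
-/

open Matrix

theorem Matrix.transpose_fromCols_mul_fromCols_eq_one_s18 {α ι κ κ' : Type*} [CommRing α]
    [Fintype ι] [DecidableEq κ] [DecidableEq κ'] {U : Matrix ι κ α} {Y : Matrix ι κ' α}
    (hU : Uᵀ * U = 1) (hY : Yᵀ * Y = 1) (hUY : Uᵀ * Y = 0) :
    (fromCols U Y)ᵀ * fromCols U Y = 1 := by
  have hYU : Yᵀ * U = 0 := by simpa using congrArg transpose hUY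
  rw [transpose_fromCols, fromRows_mul_fromCols, hU, hY, hUY, hYU, fromBlocks_one]

section OrthonormalColumns

variable {α ι κ : Type*} [CommRing α] [Fintype ι] [Fintype κ] [DecidableEq κ]
  {W : Matrix ι κ α}

theorem Matrix.dotProduct_mulVec_self_of_transpose_mul_self (hW : Wᵀ * W = 1) (v : κ → α) :
    (W *ᵥ v) ⬝ᵥ (W *ᵥ v) = v ⬝ᵥ v := by
  rw [dotProduct_mulVec, vecMul_mulVec, hW, vecMul_one]

theorem Matrix.trace_mul_mul_transpose_of_transpose_mul_self (hW : Wᵀ * W = 1)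
    (K : Matrix κ κ α) : (W * K * Wᵀ).trace = K.trace := by
  rw [trace_mul_comm, ← Matrix.mul_assoc, hW, Matrix.one_mul]

theorem Matrix.mul_mul_transpose_mulVec_mulVec_sub_mulVec (hW : Wᵀ * W = 1)
    (K : Matrix κ κ α) (c : κ → α) :
    (W * K * Wᵀ) *ᵥ (W *ᵥ c) - W *ᵥ c = W *ᵥ (K *ᵥ c - c) := by
  rw [mulVec_mulVec, Matrix.mul_assoc (W * K), hW, Matrix.mul_one, mulVec_sub, mulVec_mulVec]

end OrthonormalColumns

section Congruence

variable {α ι κ ν : Type*} [CommRing α] [Fintype κ] [Fintype ν] [DecidableEq ν]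

theorem Matrix.mul_inv_transpose_mul_mul_mul_transpose {V : Matrix ν ν α} (hV : IsUnit V.det)
    (H : Matrix ν ν α) : V * (Vᵀ * H * V)⁻¹ * Vᵀ = H⁻¹ := by
  have hVt : IsUnit Vᵀ.det := by rwa [det_transpose]
  rw [mul_inv_rev, mul_inv_rev, ← Matrix.mul_assoc, mul_nonsing_inv _ hV, Matrix.one_mul,
    Matrix.mul_assoc, nonsing_inv_mul _ hVt, Matrix.mul_one]

theorem Matrix.mul_inv_mul_transpose_eq_of_mul_eq {G : Matrix ι ν α} {V : Matrix ν ν α}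
    {W : Matrix ι κ α} {D : Matrix κ ν α} (hGV : G * V = W * D) (hV : IsUnit V.det)
    (H : Matrix ν ν α) : G * H⁻¹ * Gᵀ = W * (D * (Vᵀ * H * V)⁻¹ * Dᵀ) * Wᵀ := by
  rw [← mul_inv_transpose_mul_mul_mul_transpose hV H]
  calc G * (V * (Vᵀ * H * V)⁻¹ * Vᵀ) * Gᵀ = G * V * (Vᵀ * H * V)⁻¹ * (G * V)ᵀ := by
        simp only [transpose_mul, Matrix.mul_assoc]
    _ = W * (D * (Vᵀ * H * V)⁻¹ * Dᵀ) * Wᵀ := by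
        simp only [hGV, transpose_mul, Matrix.mul_assoc]

theorem Matrix.mul_inv_mulVec_sub_eq_of_mul_eq [Fintype ι] [DecidableEq κ] {G : Matrix ι ν α}
    {V : Matrix ν ν α} {W : Matrix ι κ α} {D : Matrix κ ν α} (hW : Wᵀ * W = 1)
    (hGV : G * V = W * D) (hV : IsUnit V.det) (H : Matrix ν ν α) (c : κ → α) :
    G *ᵥ (H⁻¹ *ᵥ (Gᵀ *ᵥ (W *ᵥ c))) - W *ᵥ c =
      W *ᵥ (D *ᵥ ((Vᵀ * H * V)⁻¹ *ᵥ (Dᵀ *ᵥ c)) - c) := by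
  have hhat := mul_inv_mul_transpose_eq_of_mul_eq hGV hV H
  simp only [mulVec_mulVec] at hhat ⊢
  rw [← Matrix.mul_assoc G, ← Matrix.mul_assoc, hhat, ← mulVec_mulVec,
    mul_mul_transpose_mulVec_mulVec_sub_mulVec hW, Matrix.mul_assoc]

theorem Matrix.trace_mul_inv_mul_transpose_eq_of_mul_eq [Fintype ι] [DecidableEq κ]
    {G : Matrix ι ν α} {V : Matrix ν ν α} {W : Matrix ι κ α} {D : Matrix κ ν α} (hW : Wᵀ * W = 1)
    (hGV : G * V = W * D) (hV : IsUnit V.det) (H : Matrix ν ν α) :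
    (G * H⁻¹ * Gᵀ).trace = (D * ((Vᵀ * H * V)⁻¹ * Dᵀ)).trace := by
  rw [mul_inv_mul_transpose_eq_of_mul_eq hGV hV,
    trace_mul_mul_transpose_of_transpose_mul_self hW, Matrix.mul_assoc]

end Congruence

section Tikhonov

variable {α ι ν : Type*} [CommRing α] [Fintype ι] [Fintype ν] [DecidableEq ν]

theorem Matrix.tikhonov_inv_mulVec_eq {Q : Matrix ν ν α} (hQ : IsUnit Q.det) (hQs : Qᵀ = Q)
    (L : Matrix ι ι α) (A : Matrix ι ν α) (b : ι → α) (μ : α) :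
    (Aᵀ * (Lᵀ * L) * A * Q + μ • 1)⁻¹ *ᵥ (Aᵀ *ᵥ ((Lᵀ * L) *ᵥ b)) =
      ((L * A * Q)ᵀ * (L * A * Q) + μ • Q)⁻¹ *ᵥ ((L * A * Q)ᵀ *ᵥ (L *ᵥ b)) := by
  have hgram : (L * A * Q)ᵀ * (L * A * Q) + μ • Q = Q * (Aᵀ * (Lᵀ * L) * A * Q + μ • 1) := by
    simp only [transpose_mul, hQs, Matrix.mul_add, Matrix.mul_smul, Matrix.mul_one,
      Matrix.mul_assoc]
  have hrhs : (L * A * Q)ᵀ *ᵥ (L *ᵥ b) = Q *ᵥ (Aᵀ *ᵥ ((Lᵀ * L) *ᵥ b)) := by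
    simp only [transpose_mul, hQs, mulVec_mulVec, Matrix.mul_assoc]
  rw [hgram, hrhs, mul_inv_rev, ← mulVec_mulVec _ _ Q⁻¹, mulVec_mulVec _ Q⁻¹ Q,
    nonsing_inv_mul _ hQ, one_mulVec]

theorem Matrix.transpose_mul_gram_mul_eq {κ : Type*} [Fintype κ] [DecidableEq κ] {G : Matrix ι ν α}
    {V Q₁ Q₂ : Matrix ν ν α} {W : Matrix ι κ α} {D : Matrix κ ν α} (hGV : G * V = W * D)
    (hW : Wᵀ * W = 1) (hV : Vᵀ * Q₁ * V = 1) (μ g : α) :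
    Vᵀ * (Gᵀ * G + μ • (g • Q₁ + (1 - g) • Q₂)) * V =
      Dᵀ * D + (μ * g) • 1 + (μ * (1 - g)) • (Vᵀ * Q₂ * V) := by
  have hDD : Vᵀ * (Gᵀ * G) * V = Dᵀ * D := by
    rw [← Matrix.mul_assoc, ← transpose_mul, Matrix.mul_assoc, hGV, transpose_mul,
      Matrix.mul_assoc, ← Matrix.mul_assoc Wᵀ, hW, Matrix.one_mul]
  simp only [Matrix.mul_add, Matrix.add_mul, Matrix.mul_smul, Matrix.smul_mul, hDD, hV,
    smul_add, smul_smul, add_assoc]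

end Tikhonov

section MixedFactorization

variable {α ι κ κ' ν : Type*} [CommRing α] [Fintype ι] [Fintype κ] [Fintype κ'] [DecidableEq ι]

theorem Matrix.smul_add_smul_eq_fromCols_mul_fromRows_s18 {P₁ P₂ : Matrix ι ν α}
    {U : Matrix ι κ α} {B : Matrix κ ν α} {Y : Matrix ι κ' α} {Rk : Matrix κ' ν α}
    (hP₁ : P₁ = U * B) (hP₂ : (1 - U * Uᵀ) * P₂ = Y * Rk) (g : α) :
    g • P₁ + (1 - g) • P₂ =
      fromCols U Y * fromRows (g • B + (1 - g) • (Uᵀ * P₂)) ((1 - g) • Rk) := by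
  have hsplit : P₂ = U * (Uᵀ * P₂) + Y * Rk := by
    rw [← hP₂, Matrix.sub_mul, Matrix.one_mul, Matrix.mul_assoc]
    abel
  rw [fromCols_mul_fromRows, Matrix.mul_add, Matrix.mul_smul, Matrix.mul_smul, Matrix.mul_smul,
    hP₁]
  conv_lhs => rw [hsplit]
  rw [smul_add]
  abel

end MixedFactorization

theorem le_iff_le_of_mul_add_eq {α : Type*} [Ring α] [LinearOrder α] [IsStrictOrderedRing α]
    {a b c f₁ f₂ g₁ g₂ : α} (ha : 0 < a) (hb : 0 < b)
    (h₁ : a * (f₁ + c) = b * (g₁ + c)) (h₂ : a * (f₂ + c) = b * (g₂ + c)) :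
    f₁ ≤ f₂ ↔ g₁ ≤ g₂ := by
  rw [← add_le_add_iff_right c, ← mul_le_mul_iff_right₀ ha, h₁, h₂, mul_le_mul_iff_right₀ hb,
    add_le_add_iff_right]

theorem stmt_18_general {m n : ℕ}
    (A : Matrix (Fin m) (Fin n) ℝ) (R LR : Matrix (Fin m) (Fin m) ℝ)
    (Q₁ Q₂ : Matrix (Fin n) (Fin n) ℝ) (b : Fin m → ℝ) (β₁ : ℝ)
    (U : Matrix (Fin m) (Fin (n + 1)) ℝ) (V : Matrix (Fin n) (Fin n) ℝ)
    (B : Matrix (Fin (n + 1)) (Fin n) ℝ)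
    (Y : Matrix (Fin m) (Fin n) ℝ) (Rk : Matrix (Fin n) (Fin n) ℝ)
    (hLR : R⁻¹ = LRᵀ * LR)
    (hQ1 : Q₁.PosDef) (hQ2 : Q₂.PosSemidef)
    (hb : U *ᵥ (β₁ • (Pi.single 0 1 : Fin (n + 1) → ℝ)) = b)
    (hAQV : A * Q₁ * V = U * B)
    (hU : Uᵀ * R⁻¹ * U = 1) (hV : Vᵀ * Q₁ * V = 1)
    (hY : Yᵀ * Y = 1) (hUY : (LR * U)ᵀ * Y = 0)
    (hQR : ((1 : Matrix (Fin m) (Fin m) ℝ) - (LR * U) * (LR * U)ᵀ) * (LR * A * Q₂ * V) = Y * Rk)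
    (sq : ℝ)
    (c : Fin (n + 1) ⊕ Fin n → ℝ)
    (hc : c = Sum.elim (β₁ • (Pi.single 0 1 : Fin (n + 1) → ℝ)) (0 : Fin n → ℝ))
    (Qf : ℝ → Matrix (Fin n) (Fin n) ℝ) (hQf : ∀ g, Qf g = g • Q₁ + (1 - g) • Q₂)
    (D : ℝ → Matrix (Fin (n + 1) ⊕ Fin n) (Fin n) ℝ)
    (hD : ∀ g, D g = fromRows (g • B + (1 - g) • ((LR * U)ᵀ * (LR * A * Q₂ * V))) ((1 - g) • Rk))
    (C : ℝ → ℝ → Matrix (Fin n) (Fin (n + 1) ⊕ Fin n) ℝ)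
    (hC : ∀ g l, C g l = ((D g)ᵀ * D g + (l ^ 2 * g) • (1 : Matrix (Fin n) (Fin n) ℝ)
        + (l ^ 2 * (1 - g)) • (Vᵀ * Q₂ * V))⁻¹ * (D g)ᵀ)
    (Uproj : ℝ → ℝ → ℝ)
    (hUproj : ∀ g l, Uproj g l =
        (1 / (2 * (n : ℝ) + 1)) *
          ((D g *ᵥ (C g l *ᵥ c) - c) ⬝ᵥ (D g *ᵥ (C g l *ᵥ c) - c))
        + (2 * sq / (2 * (n : ℝ) + 1)) * (D g * C g l).trace - sq)
    (x : ℝ → ℝ → Fin n → ℝ)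
    (hx : ∀ g l, x g l =
        (Aᵀ * R⁻¹ * A * Qf g + (l ^ 2) • (1 : Matrix (Fin n) (Fin n) ℝ))⁻¹ *ᵥ
          (Aᵀ *ᵥ (R⁻¹ *ᵥ b)))
    (Afull : ℝ → ℝ → Matrix (Fin m) (Fin m) ℝ)
    (hAfull : ∀ g l, Afull g l = LR * A * Qf g *
        ((Qf g)ᵀ * Aᵀ * R⁻¹ * A * Qf g + (l ^ 2) • Qf g)⁻¹ * (Qf g)ᵀ * Aᵀ * LRᵀ)
    (Ufull : ℝ → ℝ → ℝ)
    (hUfull : ∀ g l, Ufull g l =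
        (1 / (m : ℝ)) *
          (((LR * A * Qf g) *ᵥ x g l - LR *ᵥ b) ⬝ᵥ ((LR * A * Qf g) *ᵥ x g l - LR *ᵥ b))
        + (2 * sq / (m : ℝ)) * (Afull g l).trace - sq)
    (γstar lamstar : ℝ) (hγ0 : 0 < γstar) (hγ1 : γstar ≤ 1) :
    (∀ g l : ℝ, 0 < g → g ≤ 1 → 0 < l → Uproj γstar lamstar ≤ Uproj g l) ↔
    (∀ g l : ℝ, 0 < g → g ≤ 1 → 0 < l → Ufull γstar lamstar ≤ Ufull g l) := by
  set W := fromCols (LR * U) Y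
  have hW : Wᵀ * W = 1 := by
    refine transpose_fromCols_mul_fromCols_eq_one_s18 ?_ hY hUY
    rw [transpose_mul, Matrix.mul_assoc, ← Matrix.mul_assoc LRᵀ, ← hLR, ← Matrix.mul_assoc, hU]
  have hm : (0 : ℝ) < m := by
    rcases Nat.eq_zero_or_pos m with rfl | hm
    · -- for `m = 0` every entry of `Wᵀ * W` is an empty sum
      simpa using congrFun (congrFun hW (Sum.inl 0)) (Sum.inl 0)
    · exact_mod_cast hm
  have hVdet : IsUnit V.det := isUnit_det_of_left_inverse hV
  have hd : LR *ᵥ b = W *ᵥ c := by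
    rw [hc, fromCols_mulVec_sumElim, mulVec_zero, add_zero, ← hb, mulVec_mulVec]
  have hscale : ∀ g l, 0 < g → g ≤ 1 →
      (m : ℝ) * (Ufull g l + sq) = (2 * n + 1) * (Uproj g l + sq) := by
    intro g l hg0 hg1
    have hQ : (Qf g).PosDef := hQf g ▸ (hQ1.smul hg0).add_posSemidef (hQ2.smul (by linarith))
    have hQs : (Qf g)ᵀ = Qf g := (isHermitian_iff_isSymm.mp hQ.isHermitian).eq
    have hP₁ : LR * A * Q₁ * V = LR * U * B := by
      rw [Matrix.mul_assoc LR A, Matrix.mul_assoc LR, hAQV, Matrix.mul_assoc]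
    have hGV : LR * A * Qf g * V = W * D g := by
      rw [hD, ← smul_add_smul_eq_fromCols_mul_fromRows_s18 hP₁ hQR, hQf]
      simp only [Matrix.mul_add, Matrix.add_mul, Matrix.mul_smul, Matrix.smul_mul]
    have hCH : C g l =
        (Vᵀ * ((LR * A * Qf g)ᵀ * (LR * A * Qf g) + l ^ 2 • Qf g) * V)⁻¹ * (D g)ᵀ := by
      rw [hC, hQf, transpose_mul_gram_mul_eq (hQf g ▸ hGV) hW hV]
    have hres : (LR * A * Qf g) *ᵥ x g l - LR *ᵥ b = W *ᵥ (D g *ᵥ (C g l *ᵥ c) - c) := by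
      rw [hx, hLR, tikhonov_inv_mulVec_eq hQ.det_pos.ne'.isUnit hQs, hd,
        mul_inv_mulVec_sub_eq_of_mul_eq hW hGV hVdet, hCH, ← mulVec_mulVec]
    have htr : (Afull g l).trace = (D g * C g l).trace := by
      rw [hCH, ← trace_mul_inv_mul_transpose_eq_of_mul_eq hW hGV hVdet, hAfull, hLR]
      simp only [transpose_mul, Matrix.mul_assoc]
    rw [hUfull, hUproj, hres, dotProduct_mulVec_self_of_transpose_mul_self hW, htr]
    field_simp
    ring
  have hn : (0 : ℝ) < 2 * n + 1 := by positivity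
  exact forall₂_congr fun g l => forall₃_congr fun hg0 hg1 _ =>
    le_iff_le_of_mul_add_eq hn hm (hscale γstar lamstar hγ0 hγ1).symm (hscale g l hg0 hg1).symm

theorem stmt_18 {m n : ℕ}
    (A : Matrix (Fin m) (Fin n) ℝ) (R LR : Matrix (Fin m) (Fin m) ℝ)
    (Q₁ Q₂ : Matrix (Fin n) (Fin n) ℝ) (b : Fin m → ℝ) (β₁ : ℝ)
    (U : Matrix (Fin m) (Fin (n + 1)) ℝ) (V : Matrix (Fin n) (Fin n) ℝ)
    (B : Matrix (Fin (n + 1)) (Fin n) ℝ)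
    (Y : Matrix (Fin m) (Fin n) ℝ) (Rk : Matrix (Fin n) (Fin n) ℝ)
    (hR : R.PosDef) (hLR : R⁻¹ = LRᵀ * LR)
    (hQ1 : Q₁.PosDef) (hQ2 : Q₂.PosSemidef) (hβ : 0 < β₁)
    (hb : U *ᵥ (β₁ • (Pi.single 0 1 : Fin (n + 1) → ℝ)) = b)
    (hAQV : A * Q₁ * V = U * B)
    (hU : Uᵀ * R⁻¹ * U = 1) (hV : Vᵀ * Q₁ * V = 1)
    (hY : Yᵀ * Y = 1) (hUY : (LR * U)ᵀ * Y = 0)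
    (hRtri : Rk.BlockTriangular id)
    (hQR : ((1 : Matrix (Fin m) (Fin m) ℝ) - (LR * U) * (LR * U)ᵀ) * (LR * A * Q₂ * V) = Y * Rk)
    (sq : ℝ) (hsq : 0 ≤ sq)
    (c : Fin (n + 1) ⊕ Fin n → ℝ)
    (hc : c = Sum.elim (β₁ • (Pi.single 0 1 : Fin (n + 1) → ℝ)) (0 : Fin n → ℝ))
    (Qf : ℝ → Matrix (Fin n) (Fin n) ℝ) (hQf : ∀ g, Qf g = g • Q₁ + (1 - g) • Q₂)
    (D : ℝ → Matrix (Fin (n + 1) ⊕ Fin n) (Fin n) ℝ)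
    (hD : ∀ g, D g = fromRows (g • B + (1 - g) • ((LR * U)ᵀ * (LR * A * Q₂ * V))) ((1 - g) • Rk))
    (C : ℝ → ℝ → Matrix (Fin n) (Fin (n + 1) ⊕ Fin n) ℝ)
    (hC : ∀ g l, C g l = ((D g)ᵀ * D g + (l ^ 2 * g) • (1 : Matrix (Fin n) (Fin n) ℝ)
        + (l ^ 2 * (1 - g)) • (Vᵀ * Q₂ * V))⁻¹ * (D g)ᵀ)
    (Uproj : ℝ → ℝ → ℝ)
    (hUproj : ∀ g l, Uproj g l =
        (1 / (2 * (n : ℝ) + 1)) *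
          ((D g *ᵥ (C g l *ᵥ c) - c) ⬝ᵥ (D g *ᵥ (C g l *ᵥ c) - c))
        + (2 * sq / (2 * (n : ℝ) + 1)) * (D g * C g l).trace - sq)
    (x : ℝ → ℝ → Fin n → ℝ)
    (hx : ∀ g l, x g l =
        (Aᵀ * R⁻¹ * A * Qf g + (l ^ 2) • (1 : Matrix (Fin n) (Fin n) ℝ))⁻¹ *ᵥ
          (Aᵀ *ᵥ (R⁻¹ *ᵥ b)))
    (Afull : ℝ → ℝ → Matrix (Fin m) (Fin m) ℝ)
    (hAfull : ∀ g l, Afull g l = LR * A * Qf g *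
        ((Qf g)ᵀ * Aᵀ * R⁻¹ * A * Qf g + (l ^ 2) • Qf g)⁻¹ * (Qf g)ᵀ * Aᵀ * LRᵀ)
    (Ufull : ℝ → ℝ → ℝ)
    (hUfull : ∀ g l, Ufull g l =
        (1 / (m : ℝ)) *
          (((LR * A * Qf g) *ᵥ x g l - LR *ᵥ b) ⬝ᵥ ((LR * A * Qf g) *ᵥ x g l - LR *ᵥ b))
        + (2 * sq / (m : ℝ)) * (Afull g l).trace - sq)
    (γstar lamstar : ℝ) (hγ0 : 0 < γstar) (hγ1 : γstar ≤ 1) (hlam : 0 < lamstar) :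
    (∀ g l : ℝ, 0 < g → g ≤ 1 → 0 < l → Uproj γstar lamstar ≤ Uproj g l) ↔
    (∀ g l : ℝ, 0 < g → g ≤ 1 → 0 < l → Ufull γstar lamstar ≤ Ufull g l) :=
  stmt_18_general A R LR Q₁ Q₂ b β₁ U V B Y Rk hLR hQ1 hQ2 hb hAQV hU hV hY hUY hQR sq c hc Qf hQf D
    hD C hC Uproj hUproj x hx Afull hAfull Ufull hUfull γstar lamstar hγ0 hγ1
end

section
/- (Weighted GCV at k = n) Assume the mixGK setup with k = n and set ω = (2n+1)/m. For 0 < γ ≤ 1 and λ > 0 define C_n(γ,λ) = (D_n(γ)ᵀD_n(γ) + λ²γI_n + λ²(1−γ)V_nᵀQ₂V_n)⁻¹ D_n(γ)ᵀ, and suppose tr(D_n(γ)C_n(γ,λ)) < m for all such (γ,λ). Then: (i) tr(I_{2n+1} − ω D_n(γ)C_n(γ,λ)) = ((2n+1)/m)(m − tr(D_n(γ)C_n(γ,λ))); and (ii) with x(γ,λ) = (AᵀR⁻¹AQ + λ²I_n)⁻¹AᵀR⁻¹b and A(γ,λ) = L_R A Q (QᵀAᵀR⁻¹AQ + λ²Q)⁻¹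 QᵀAᵀL_Rᵀ, defining W_proj(γ,λ) = ‖D_n(γ)C_n(γ,λ)c − c‖₂² / (tr(I_{2n+1} − ω D_n(γ)C_n(γ,λ)))² and G_full(γ,λ) = ‖L_R A Q x(γ,λ) − L_R b‖₂² / (tr(I_m − A(γ,λ)))², a pair (γ*,λ*) minimizes W_proj over 0 < γ ≤ 1, λ > 0 if and only if it minimizes G_full over the same set. -/
/-!
Let `Z = [L_R U_{n+1}, Y_n]`; its columns are orthonormal. Since `k = n`, the genGK and QR
relations give `Z D_n(γ) = L_R A Q V_n` with `V_n` invertible (`V_nᵀ Q₁ V_n = I`), so the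
projected regularized problem is the full one written in the coordinates `Z` and `V_n`:
`D_n C_n = Zᵀ A(γ,λ) Z`, where the range of `A(γ,λ)` lies in that of `Z`. Consequently
`tr(D_n C_n) = tr A(γ,λ)`, and `Z` maps the projected residual `D_n C_n c - c` isometrically
onto the full residual `L_R A Q x - L_R b` (as `Z c = L_R b`). The weight `ω = (2n+1)/m` turns
the trace term into `(2n+1)/m · tr(I_m - A(γ,λ))`, so `W_proj = (m/(2n+1))² G_full` on the
whole parameter set, and the two functions have the same minimizers.
-/

open Matrix

namespace MixGK

section MatrixIdentities

variable {𝕜 : Type*} [CommRing 𝕜] {m n p q : Type*}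

/-- The influence matrix of `min_y ‖N y - r‖² + μ yᵀ Q y`; the paper's `A(γ,λ)` is
`tikhonovHat (L_R A Q) Q λ²`. -/
noncomputable def tikhonovHat [Fintype m] [Fintype n] [DecidableEq n] (N : Matrix m n 𝕜)
    (Q : Matrix n n 𝕜) (μ : 𝕜) : Matrix m m 𝕜 :=
  N * (Nᵀ * N + μ • Q)⁻¹ * Nᵀ

theorem trace_one_sub_smul [Fintype p] [DecidableEq p] (M : Matrix p p 𝕜) (ω : 𝕜) :
    (1 - ω • M).trace = Fintype.card p - ω * M.trace := by
  rw [trace_sub, trace_one, trace_smul, smul_eq_mul]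

theorem fromCols_transpose_mul_self [Fintype m] [DecidableEq p] [DecidableEq q]
    {Z₁ : Matrix m p 𝕜} {Z₂ : Matrix m q 𝕜} (h₁ : Z₁ᵀ * Z₁ = 1) (h₂ : Z₂ᵀ * Z₂ = 1)
    (h₁₂ : Z₁ᵀ * Z₂ = 0) : (fromCols Z₁ Z₂)ᵀ * fromCols Z₁ Z₂ = 1 := by
  have h₂₁ : Z₂ᵀ * Z₁ = 0 := by simpa using congrArg transpose h₁₂
  rw [transpose_fromCols, fromRows_mul_fromCols, h₁, h₂, h₁₂, h₂₁, fromBlocks_one]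

theorem nonempty_of_mul_eq_one [Nontrivial 𝕜] [Fintype m] [Fintype p] [DecidableEq p] [Nonempty p]
    {A : Matrix p m 𝕜} {B : Matrix m p 𝕜} (h : A * B = 1) : Nonempty m := by
  by_contra hm
  rw [not_nonempty_iff] at hm
  have hAB : A * B = 0 := by
    ext i j
    simp [mul_apply]
  exact one_ne_zero (h.symm.trans hAB)

theorem fromCols_mul_fromRows_eq_mul_smul_add_smul {k : Type*} [Fintype m] [DecidableEq m]
    [Fintype p] [Fintype q] [Fintype k] {Ũ : Matrix m p 𝕜} {Y : Matrix m q 𝕜} {B : Matrix p n 𝕜}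
    {Rk : Matrix q n 𝕜} {M : Matrix m k 𝕜} {Q₁ Q₂ : Matrix k k 𝕜} {V : Matrix k n 𝕜}
    (hB : M * Q₁ * V = Ũ * B) (hQR : (1 - Ũ * Ũᵀ) * (M * Q₂ * V) = Y * Rk) (g : 𝕜) :
    fromCols Ũ Y * fromRows (g • B + (1 - g) • (Ũᵀ * (M * Q₂ * V))) ((1 - g) • Rk) =
      M * (g • Q₁ + (1 - g) • Q₂) * V := by
  rw [fromCols_mul_fromRows, Matrix.mul_smul, ← hQR, Matrix.mul_add, Matrix.mul_smul,
    Matrix.mul_smul, Matrix.sub_mul, Matrix.one_mul, ← hB]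
  simp only [Matrix.mul_add, Matrix.add_mul, Matrix.mul_smul, Matrix.smul_mul, Matrix.mul_assoc]
  module

theorem smul_one_add_smul_eq_smul_transpose_mul_mul [Fintype n] [DecidableEq n]
    {V Q₁ Q₂ : Matrix n n 𝕜} (hV : Vᵀ * Q₁ * V = 1) (μ g : 𝕜) :
    (μ * g) • (1 : Matrix n n 𝕜) + (μ * (1 - g)) • (Vᵀ * Q₂ * V) =
      μ • (Vᵀ * (g • Q₁ + (1 - g) • Q₂) * V) := by
  rw [Matrix.mul_add, Matrix.add_mul, Matrix.mul_smul, Matrix.smul_mul, hV, Matrix.mul_smul,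
    Matrix.smul_mul, smul_add, smul_smul, smul_smul]

theorem dotProduct_self_mulVec_of_transpose_mul_self [Fintype m] [Fintype p] [DecidableEq p]
    {Z : Matrix m p 𝕜} (hZ : Zᵀ * Z = 1) (v : p → 𝕜) : Z *ᵥ v ⬝ᵥ Z *ᵥ v = v ⬝ᵥ v := by
  rw [dotProduct_mulVec, ← mulVec_transpose, mulVec_mulVec, hZ, one_mulVec]

/-- The columns of `N` lie in the range of `Z`. -/
theorem mul_transpose_mul_of_mul_eq [Fintype m] [Fintype n] [DecidableEq n] [Fintype p]
    [DecidableEq p] {Z : Matrix m p 𝕜} (hZ : Zᵀ * Z = 1) {D : Matrix p n 𝕜} {N : Matrix m n 𝕜}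
    {V : Matrix n n 𝕜} (hV : IsUnit V.det) (hZD : Z * D = N * V) : Z * (Zᵀ * N) = N := by
  have hN : N = Z * (D * V⁻¹) := by
    rw [← Matrix.mul_assoc, hZD, Matrix.mul_assoc, mul_nonsing_inv V hV, Matrix.mul_one]
  conv_lhs => rw [hN, ← Matrix.mul_assoc Zᵀ, hZ, Matrix.one_mul, ← hN]

theorem mul_transpose_mul_tikhonovHat [Fintype m] [Fintype n] [DecidableEq n] [Fintype p]
    {Z : Matrix m p 𝕜} {N : Matrix m n 𝕜} (hZN : Z * (Zᵀ * N) = N) (Q : Matrix n n 𝕜) (μ : 𝕜) :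
    Z * Zᵀ * tikhonovHat N Q μ = tikhonovHat N Q μ := by
  simp only [tikhonovHat, ← Matrix.mul_assoc] at hZN ⊢
  rw [hZN]

theorem trace_transpose_mul_mul_of_mul_transpose_mul [Fintype m] [Fintype p] {Z : Matrix m p 𝕜}
    {H : Matrix m m 𝕜} (hZH : Z * Zᵀ * H = H) : (Zᵀ * H * Z).trace = H.trace := by
  rw [trace_mul_comm, ← Matrix.mul_assoc, hZH]

theorem mulVec_transpose_mul_mul_mulVec_sub [Fintype m] [Fintype p] {Z : Matrix m p 𝕜}
    {H : Matrix m m 𝕜} (hZH : Z * Zᵀ * H = H) (c : p → 𝕜) :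
    Z *ᵥ ((Zᵀ * H * Z) *ᵥ c - c) = H *ᵥ (Z *ᵥ c) - Z *ᵥ c := by
  rw [mulVec_sub, mulVec_mulVec, ← Matrix.mul_assoc, ← Matrix.mul_assoc, hZH, ← mulVec_mulVec]

/-- The projected influence matrix is the compression of the full one. -/
theorem mul_inv_mul_transpose_eq_tikhonovHat [Fintype m] [Fintype n] [DecidableEq n] [Fintype p]
    [DecidableEq p] {Z : Matrix m p 𝕜} (hZ : Zᵀ * Z = 1) {D : Matrix p n 𝕜} {N : Matrix m n 𝕜}
    {V : Matrix n n 𝕜} (hV : IsUnit V.det) (hZD : Z * D = N * V) (Q : Matrix n n 𝕜) (μ : 𝕜) :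
    D * (Dᵀ * D + μ • (Vᵀ * Q * V))⁻¹ * Dᵀ = Zᵀ * tikhonovHat N Q μ * Z := by
  have hD : D = Zᵀ * N * V := by
    rw [Matrix.mul_assoc, ← hZD, ← Matrix.mul_assoc, hZ, Matrix.one_mul]
  have hVt : IsUnit Vᵀ.det := by rwa [det_transpose]
  have hDD : Dᵀ * D = Vᵀ * (Nᵀ * N) * V := by
    calc Dᵀ * D = (Z * D)ᵀ * (Z * D) := by
          rw [transpose_mul, Matrix.mul_assoc, ← Matrix.mul_assoc Zᵀ, hZ, Matrix.one_mul]
      _ = Vᵀ * (Nᵀ * N) * V := by rw [hZD, transpose_mul]; simp only [Matrix.mul_assoc]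
  have hK : Dᵀ * D + μ • (Vᵀ * Q * V) = Vᵀ * (Nᵀ * N + μ • Q) * V := by
    rw [hDD, Matrix.mul_add, Matrix.add_mul, Matrix.mul_smul, Matrix.smul_mul]
  rw [hK, Matrix.mul_inv_rev, Matrix.mul_inv_rev, hD, tikhonovHat]
  simp only [transpose_mul, transpose_transpose, Matrix.mul_assoc]
  rw [← Matrix.mul_assoc V, mul_nonsing_inv V hV, Matrix.one_mul, ← Matrix.mul_assoc Vᵀ⁻¹,
    nonsing_inv_mul Vᵀ hVt, Matrix.one_mul]

theorem mul_inv_mul_transpose_eq_tikhonovHat_of_eq [Fintype m] [Fintype n] [DecidableEq n]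
    (A : Matrix m n 𝕜) {W LR : Matrix m m 𝕜} (hW : W = LRᵀ * LR) (Q : Matrix n n 𝕜) (μ : 𝕜) :
    LR * A * Q * (Qᵀ * Aᵀ * W * A * Q + μ • Q)⁻¹ * Qᵀ * Aᵀ * LRᵀ =
      tikhonovHat (LR * A * Q) Q μ := by
  rw [hW, tikhonovHat]
  simp only [transpose_mul, Matrix.mul_assoc]

theorem mulVec_inv_mulVec_eq_tikhonovHat_mulVec [Fintype m] [Fintype n] [DecidableEq n]
    (A : Matrix m n 𝕜) {W LR : Matrix m m 𝕜} (hW : W = LRᵀ * LR) {Q : Matrix n n 𝕜}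
    (hQ : Qᵀ = Q) {μ : 𝕜} (hK : IsUnit ((LR * A * Q)ᵀ * (LR * A * Q) + μ • Q).det) (b : m → 𝕜) :
    (LR * A * Q) *ᵥ ((Aᵀ * W * A * Q + μ • 1)⁻¹ *ᵥ (Aᵀ *ᵥ (W *ᵥ b))) =
      tikhonovHat (LR * A * Q) Q μ *ᵥ (LR *ᵥ b) := by
  have hQS : Q * (Aᵀ * W * A * Q + μ • 1) = (LR * A * Q)ᵀ * (LR * A * Q) + μ • Q := by
    rw [hW, transpose_mul, transpose_mul, hQ, Matrix.mul_add, Matrix.mul_smul, Matrix.mul_one]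
    simp only [Matrix.mul_assoc]
  have hinv : (Aᵀ * W * A * Q + μ • 1)⁻¹ = ((LR * A * Q)ᵀ * (LR * A * Q) + μ • Q)⁻¹ * Q :=
    inv_eq_left_inv (by rw [Matrix.mul_assoc, hQS, nonsing_inv_mul _ hK])
  rw [hinv, tikhonovHat, hW]
  simp only [mulVec_mulVec, transpose_mul, hQ, Matrix.mul_assoc]

theorem isUnit_det_transpose_mul_self_add_smul [Fintype m] [Fintype n] [DecidableEq n]
    (N : Matrix m n ℝ) {Q : Matrix n n ℝ} (hQ : Q.PosDef) {μ : ℝ} (hμ : 0 < μ) :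
    IsUnit (Nᵀ * N + μ • Q).det := by
  have hN : (Nᵀ * N).PosSemidef := by
    rw [← conjTranspose_eq_transpose_of_trivial]
    exact posSemidef_conjTranspose_mul_self N
  exact (isUnit_iff_isUnit_det _).1 (PosDef.posSemidef_add hN (hQ.smul hμ)).isUnit

end MatrixIdentities

section GCV

variable {K : Type*} [Field K] {m n p : Type*} [Fintype m] [DecidableEq m] [Fintype p]
  [DecidableEq p]

noncomputable def weightedGCV (H : Matrix p p K) (r : p → K) (ω : K) : K :=
  (H *ᵥ r - r) ⬝ᵥ (H *ᵥ r - r) / (1 - ω • H).trace ^ 2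

/-- The weight `|p| / |m|` is exactly what makes the two GCV functions proportional. -/
theorem weightedGCV_transpose_mul_mul {Z : Matrix m p K} (hZ : Zᵀ * Z = 1) {H : Matrix m m K}
    (hZH : Z * Zᵀ * H = H) (hm : (Fintype.card m : K) ≠ 0) (c : p → K) :
    weightedGCV (Zᵀ * H * Z) c (Fintype.card p / Fintype.card m) =
      (Fintype.card m / Fintype.card p : K) ^ 2 * weightedGCV H (Z *ᵥ c) 1 := by
  have htrace : (Fintype.card p : K) - Fintype.card p / Fintype.card m * H.trace =
      Fintype.card p / Fintype.card m * (Fintype.card m - H.trace) := by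
    field_simp
  rw [weightedGCV, weightedGCV, ← dotProduct_self_mulVec_of_transpose_mul_self hZ,
    mulVec_transpose_mul_mul_mulVec_sub hZH, trace_one_sub_smul, trace_one_sub_smul,
    trace_transpose_mul_mul_of_mul_transpose_mul hZH, one_mul, htrace, mul_pow, ← div_div,
    div_pow, div_pow, div_div_eq_mul_div]
  ring

theorem weightedGCV_mixGK_projected [Fintype n] [DecidableEq n] {q r : Type*} [Fintype q]
    [DecidableEq q] [Fintype r] [DecidableEq r] {Ũ : Matrix m q K} {Y : Matrix m r K}
    (hZ : (fromCols Ũ Y)ᵀ * fromCols Ũ Y = 1) {M : Matrix m n K} {Q₁ Q₂ V : Matrix n n K}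
    {B : Matrix q n K} {Rk : Matrix r n K} (hV : Vᵀ * Q₁ * V = 1) (hB : M * Q₁ * V = Ũ * B)
    (hQR : (1 - Ũ * Ũᵀ) * (M * Q₂ * V) = Y * Rk) (hm : (Fintype.card m : K) ≠ 0) (g μ : K)
    {D : Matrix (q ⊕ r) n K}
    (hD : D = fromRows (g • B + (1 - g) • (Ũᵀ * (M * Q₂ * V))) ((1 - g) • Rk)) (c : q ⊕ r → K) :
    weightedGCV (D * ((Dᵀ * D + (μ * g) • 1 + (μ * (1 - g)) • (Vᵀ * Q₂ * V))⁻¹ * Dᵀ)) c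
        (Fintype.card (q ⊕ r) / Fintype.card m) =
      (Fintype.card m / Fintype.card (q ⊕ r) : K) ^ 2 *
        weightedGCV (tikhonovHat (M * (g • Q₁ + (1 - g) • Q₂)) (g • Q₁ + (1 - g) • Q₂) μ)
          (fromCols Ũ Y *ᵥ c) 1 := by
  have hVdet : IsUnit V.det :=
    IsUnit.of_mul_eq_one_right (Vᵀ * Q₁).det (by rw [← det_mul, hV, det_one])
  have hZD : fromCols Ũ Y * D = M * (g • Q₁ + (1 - g) • Q₂) * V := by
    rw [hD, fromCols_mul_fromRows_eq_mul_smul_add_smul hB hQR]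
  rw [add_assoc, smul_one_add_smul_eq_smul_transpose_mul_mul hV, ← Matrix.mul_assoc,
    mul_inv_mul_transpose_eq_tikhonovHat hZ hVdet hZD, weightedGCV_transpose_mul_mul hZ
      (mul_transpose_mul_tikhonovHat (mul_transpose_mul_of_mul_eq hZ hVdet hZD) _ _) hm]

end GCV

end MixGK

open MixGK

theorem stmt_19_general {m n : ℕ}
    (A : Matrix (Fin m) (Fin n) ℝ) (R LR : Matrix (Fin m) (Fin m) ℝ)
    (Q₁ Q₂ : Matrix (Fin n) (Fin n) ℝ) (b : Fin m → ℝ) (β₁ : ℝ)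
    (U : Matrix (Fin m) (Fin (n + 1)) ℝ) (V : Matrix (Fin n) (Fin n) ℝ)
    (B : Matrix (Fin (n + 1)) (Fin n) ℝ)
    (Y : Matrix (Fin m) (Fin n) ℝ) (Rk : Matrix (Fin n) (Fin n) ℝ)
    (hLR : R⁻¹ = LRᵀ * LR)
    (hQ1 : Q₁.PosDef) (hQ2 : Q₂.PosSemidef)
    (hb : U *ᵥ (β₁ • (Pi.single 0 1 : Fin (n + 1) → ℝ)) = b)
    (hAQV : A * Q₁ * V = U * B)
    (hU : Uᵀ * R⁻¹ * U = 1) (hV : Vᵀ * Q₁ * V = 1)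
    (hY : Yᵀ * Y = 1) (hUY : (LR * U)ᵀ * Y = 0)
    (hQR : ((1 : Matrix (Fin m) (Fin m) ℝ) - (LR * U) * (LR * U)ᵀ) * (LR * A * Q₂ * V) = Y * Rk)
    (ω : ℝ) (hω : ω = (2 * (n : ℝ) + 1) / (m : ℝ))
    (c : Fin (n + 1) ⊕ Fin n → ℝ)
    (hc : c = Sum.elim (β₁ • (Pi.single 0 1 : Fin (n + 1) → ℝ)) (0 : Fin n → ℝ))
    (Qf : ℝ → Matrix (Fin n) (Fin n) ℝ) (hQf : ∀ g, Qf g = g • Q₁ + (1 - g) • Q₂)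
    (D : ℝ → Matrix (Fin (n + 1) ⊕ Fin n) (Fin n) ℝ)
    (hD : ∀ g, D g = fromRows (g • B + (1 - g) • ((LR * U)ᵀ * (LR * A * Q₂ * V))) ((1 - g) • Rk))
    (C : ℝ → ℝ → Matrix (Fin n) (Fin (n + 1) ⊕ Fin n) ℝ)
    (hC : ∀ g l, C g l = ((D g)ᵀ * D g + (l ^ 2 * g) • (1 : Matrix (Fin n) (Fin n) ℝ)
        + (l ^ 2 * (1 - g)) • (Vᵀ * Q₂ * V))⁻¹ * (D g)ᵀ)
    (x : ℝ → ℝ → Fin n → ℝ)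
    (hx : ∀ g l, x g l =
        (Aᵀ * R⁻¹ * A * Qf g + (l ^ 2) • (1 : Matrix (Fin n) (Fin n) ℝ))⁻¹ *ᵥ
          (Aᵀ *ᵥ (R⁻¹ *ᵥ b)))
    (Afull : ℝ → ℝ → Matrix (Fin m) (Fin m) ℝ)
    (hAfull : ∀ g l, Afull g l = LR * A * Qf g *
        ((Qf g)ᵀ * Aᵀ * R⁻¹ * A * Qf g + (l ^ 2) • Qf g)⁻¹ * (Qf g)ᵀ * Aᵀ * LRᵀ)
    (Wproj : ℝ → ℝ → ℝ)
    (hWproj : ∀ g l, Wproj g l =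
        ((D g *ᵥ (C g l *ᵥ c) - c) ⬝ᵥ (D g *ᵥ (C g l *ᵥ c) - c)) /
          (((1 : Matrix (Fin (n + 1) ⊕ Fin n) (Fin (n + 1) ⊕ Fin n) ℝ)
            - ω • (D g * C g l)).trace) ^ 2)
    (Gfull : ℝ → ℝ → ℝ)
    (hGfull : ∀ g l, Gfull g l =
        (((LR * A * Qf g) *ᵥ x g l - LR *ᵥ b) ⬝ᵥ ((LR * A * Qf g) *ᵥ x g l - LR *ᵥ b)) /
          (((1 : Matrix (Fin m) (Fin m) ℝ) - Afull g l).trace) ^ 2) :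
    (∀ g l : ℝ, 0 < g → g ≤ 1 → 0 < l →
      ((1 : Matrix (Fin (n + 1) ⊕ Fin n) (Fin (n + 1) ⊕ Fin n) ℝ)
          - ω • (D g * C g l)).trace =
        ((2 * (n : ℝ) + 1) / (m : ℝ)) * ((m : ℝ) - (D g * C g l).trace)) ∧
    (∀ γstar lamstar : ℝ, 0 < γstar → γstar ≤ 1 → 0 < lamstar →
      ((∀ g l : ℝ, 0 < g → g ≤ 1 → 0 < l → Wproj γstar lamstar ≤ Wproj g l) ↔
       (∀ g l : ℝ, 0 < g → g ≤ 1 → 0 < l → Gfull γstar lamstar ≤ Gfull g l))) := by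
  classical
  have hm : (m : ℝ) ≠ 0 :=
    Nat.cast_ne_zero.2 (Fin.pos_iff_nonempty.2 (nonempty_of_mul_eq_one hU)).ne'
  have hZ : (fromCols (LR * U) Y)ᵀ * fromCols (LR * U) Y = 1 := by
    refine fromCols_transpose_mul_self ?_ hY hUY
    rw [transpose_mul, Matrix.mul_assoc, ← Matrix.mul_assoc LRᵀ, ← hLR, ← Matrix.mul_assoc, hU]
  have hZc : fromCols (LR * U) Y *ᵥ c = LR *ᵥ b := by
    rw [hc, fromCols_mulVec_sumElim, mulVec_zero, add_zero, ← mulVec_mulVec, hb]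
  have hcard : (Fintype.card (Fin (n + 1) ⊕ Fin n) : ℝ) = 2 * n + 1 := by
    rw [Fintype.card_sum, Fintype.card_fin, Fintype.card_fin]
    push_cast
    ring
  have hω' : ω = Fintype.card (Fin (n + 1) ⊕ Fin n) / Fintype.card (Fin m) := by
    rw [hω, hcard, Fintype.card_fin]
  have part1 : ∀ g l : ℝ, 0 < g → g ≤ 1 → 0 < l →
      ((1 : Matrix (Fin (n + 1) ⊕ Fin n) (Fin (n + 1) ⊕ Fin n) ℝ)
          - ω • (D g * C g l)).trace =
        ((2 * (n : ℝ) + 1) / (m : ℝ)) * ((m : ℝ) - (D g * C g l).trace) := by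
    intro g l _ _ _
    rw [trace_one_sub_smul, hω, hcard]
    field_simp
  have hWG : ∀ g l : ℝ, 0 < g → g ≤ 1 → 0 < l →
      Wproj g l = ((m : ℝ) / (2 * n + 1)) ^ 2 * Gfull g l := by
    intro g l hg hg1 hl
    have hQg : (Qf g).PosDef := hQf g ▸ (hQ1.smul hg).add_posSemidef (hQ2.smul (by linarith))
    have hQgT : (Qf g)ᵀ = Qf g := by
      simpa [conjTranspose_eq_transpose_of_trivial] using hQg.isHermitian.eq
    have hW : Wproj g l = weightedGCV (D g * C g l) c ω := by
      rw [hWproj, weightedGCV, mulVec_mulVec]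
    have hG : Gfull g l = weightedGCV (tikhonovHat (LR * A * Qf g) (Qf g) (l ^ 2)) (LR *ᵥ b) 1 := by
      rw [hGfull, weightedGCV, one_smul, hAfull, hx,
        mul_inv_mul_transpose_eq_tikhonovHat_of_eq A hLR, mulVec_inv_mulVec_eq_tikhonovHat_mulVec A hLR hQgT
          (isUnit_det_transpose_mul_self_add_smul _ hQg (pow_pos hl 2))]
    have hB : LR * A * Q₁ * V = LR * U * B := by simp only [Matrix.mul_assoc, ← hAQV]
    rw [hW, hG, hC, hω', weightedGCV_mixGK_projected hZ hV hB hQR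
      (by rwa [Fintype.card_fin]) g (l ^ 2) (hD g), hZc, hQf, hcard, Fintype.card_fin]
  refine ⟨part1, fun γ lam hγ hγ1 hlam => forall₂_congr fun g l => ?_⟩
  refine imp_congr_right fun hg => imp_congr_right fun hg1 => imp_congr_right fun hl => ?_
  have hκ : 0 < ((m : ℝ) / (2 * n + 1)) ^ 2 := by positivity
  rw [hWG γ lam hγ hγ1 hlam, hWG g l hg hg1 hl, mul_le_mul_iff_right₀ hκ]

theorem stmt_19 {m n : ℕ}
    (A : Matrix (Fin m) (Fin n) ℝ) (R LR : Matrix (Fin m) (Fin m) ℝ)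
    (Q₁ Q₂ : Matrix (Fin n) (Fin n) ℝ) (b : Fin m → ℝ) (β₁ : ℝ)
    (U : Matrix (Fin m) (Fin (n + 1)) ℝ) (V : Matrix (Fin n) (Fin n) ℝ)
    (B : Matrix (Fin (n + 1)) (Fin n) ℝ)
    (Y : Matrix (Fin m) (Fin n) ℝ) (Rk : Matrix (Fin n) (Fin n) ℝ)
    (hR : R.PosDef) (hLR : R⁻¹ = LRᵀ * LR)
    (hQ1 : Q₁.PosDef) (hQ2 : Q₂.PosSemidef) (hβ : 0 < β₁)
    (hb : U *ᵥ (β₁ • (Pi.single 0 1 : Fin (n + 1) → ℝ)) = b)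
    (hAQV : A * Q₁ * V = U * B)
    (hU : Uᵀ * R⁻¹ * U = 1) (hV : Vᵀ * Q₁ * V = 1)
    (hY : Yᵀ * Y = 1) (hUY : (LR * U)ᵀ * Y = 0)
    (hRtri : Rk.BlockTriangular id)
    (hQR : ((1 : Matrix (Fin m) (Fin m) ℝ) - (LR * U) * (LR * U)ᵀ) * (LR * A * Q₂ * V) = Y * Rk)
    (ω : ℝ) (hω : ω = (2 * (n : ℝ) + 1) / (m : ℝ))
    (c : Fin (n + 1) ⊕ Fin n → ℝ)
    (hc : c = Sum.elim (β₁ • (Pi.single 0 1 : Fin (n + 1) → ℝ)) (0 : Fin n → ℝ))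
    (Qf : ℝ → Matrix (Fin n) (Fin n) ℝ) (hQf : ∀ g, Qf g = g • Q₁ + (1 - g) • Q₂)
    (D : ℝ → Matrix (Fin (n + 1) ⊕ Fin n) (Fin n) ℝ)
    (hD : ∀ g, D g = fromRows (g • B + (1 - g) • ((LR * U)ᵀ * (LR * A * Q₂ * V))) ((1 - g) • Rk))
    (C : ℝ → ℝ → Matrix (Fin n) (Fin (n + 1) ⊕ Fin n) ℝ)
    (hC : ∀ g l, C g l = ((D g)ᵀ * D g + (l ^ 2 * g) • (1 : Matrix (Fin n) (Fin n) ℝ)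
        + (l ^ 2 * (1 - g)) • (Vᵀ * Q₂ * V))⁻¹ * (D g)ᵀ)
    (htr : ∀ g l : ℝ, 0 < g → g ≤ 1 → 0 < l → (D g * C g l).trace < (m : ℝ))
    (x : ℝ → ℝ → Fin n → ℝ)
    (hx : ∀ g l, x g l =
        (Aᵀ * R⁻¹ * A * Qf g + (l ^ 2) • (1 : Matrix (Fin n) (Fin n) ℝ))⁻¹ *ᵥ
          (Aᵀ *ᵥ (R⁻¹ *ᵥ b)))
    (Afull : ℝ → ℝ → Matrix (Fin m) (Fin m) ℝ)
    (hAfull : ∀ g l, Afull g l = LR * A * Qf g *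
        ((Qf g)ᵀ * Aᵀ * R⁻¹ * A * Qf g + (l ^ 2) • Qf g)⁻¹ * (Qf g)ᵀ * Aᵀ * LRᵀ)
    (Wproj : ℝ → ℝ → ℝ)
    (hWproj : ∀ g l, Wproj g l =
        ((D g *ᵥ (C g l *ᵥ c) - c) ⬝ᵥ (D g *ᵥ (C g l *ᵥ c) - c)) /
          (((1 : Matrix (Fin (n + 1) ⊕ Fin n) (Fin (n + 1) ⊕ Fin n) ℝ)
            - ω • (D g * C g l)).trace) ^ 2)
    (Gfull : ℝ → ℝ → ℝ)
    (hGfull : ∀ g l, Gfull g l =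
        (((LR * A * Qf g) *ᵥ x g l - LR *ᵥ b) ⬝ᵥ ((LR * A * Qf g) *ᵥ x g l - LR *ᵥ b)) /
          (((1 : Matrix (Fin m) (Fin m) ℝ) - Afull g l).trace) ^ 2) :
    (∀ g l : ℝ, 0 < g → g ≤ 1 → 0 < l →
      ((1 : Matrix (Fin (n + 1) ⊕ Fin n) (Fin (n + 1) ⊕ Fin n) ℝ)
          - ω • (D g * C g l)).trace =
        ((2 * (n : ℝ) + 1) / (m : ℝ)) * ((m : ℝ) - (D g * C g l).trace)) ∧
    (∀ γstar lamstar : ℝ, 0 < γstar → γstar ≤ 1 → 0 < lamstar →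
      ((∀ g l : ℝ, 0 < g → g ≤ 1 → 0 < l → Wproj γstar lamstar ≤ Wproj g l) ↔
       (∀ g l : ℝ, 0 < g → g ≤ 1 → 0 < l → Gfull γstar lamstar ≤ Gfull g l))) :=
  stmt_19_general A R LR Q₁ Q₂ b β₁ U V B Y Rk hLR hQ1 hQ2 hb hAQV hU hV hY hUY hQR ω hω c hc Qf hQf
    D hD C hC x hx Afull hAfull Wproj hWproj Gfull hGfull
end
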